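/- arXiv:2509.14529 — 3 statements merged into one kernel-verified Lean document; each statement's English description precedes it below -/
import Mathlib

section
/- Classification of one-dimensional rough paths (converse direction of Proposition 4.1): Let T > 0, α ∈ (0,1], k := ⌊1/α⌋, and let (𝕐^n)_{n=0,…,k} be a one-dimensional α-Hölder rough path on [0,T] with constant C_𝕐. Set Y_t := 𝕐^1_{0,t}. Then there exist functions F^2, …, F^k : [0,T] → ℝ with F^m_0 = 0 and a constant C' (depending only on k, α, T, C_𝕐) such that |F^m_t − F^m_s| ≤ C'·(t−s)^{mα} for all 0 ≤ s ≤ t ≤ T and m = 2, …, k, and such that 𝕐^n_{s,t} = P_n^{(k)}(Y_t − Y_s, F^2_t − F^2_s, …, F^k_t − F^k_s) for all 0 ≤ s ≤ t ≤ T and n = 0, …, k. -/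
open Finset

/-- The `n`-th complete Bell polynomial of degree `k`. -/
noncomputable def bellP (k n : ℕ) (a : Fin k → ℝ) : ℝ :=
  ∑ p ∈ (Fintype.piFinset fun _ : Fin k => Finset.range (n + 1)).filter
      (fun p => ∑ m : Fin k, ((m : ℕ) + 1) * p m = n),
    ∏ m : Fin k, a m ^ p m / (Nat.factorial (p m) : ℝ)

-- auxiliary lemmas
def Wt (k : ℕ) (p : Fin k → ℕ) : ℕ := ∑ m : Fin k, ((m : ℕ) + 1) * p m

def bSet (k n : ℕ) : Finset (Fin k → ℕ) :=
  (Fintype.piFinset fun _ : Fin k => Finset.range (n + 1)).filter (fun p => Wt k p = n)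

lemma bellP_eq (k n : ℕ) (a : Fin k → ℝ) :
    bellP k n a = ∑ p ∈ bSet k n, ∏ m : Fin k, a m ^ p m / (Nat.factorial (p m) : ℝ) := rfl

lemma le_Wt (k : ℕ) (p : Fin k → ℕ) (i : Fin k) : ((i : ℕ) + 1) * p i ≤ Wt k p :=
  Finset.single_le_sum (f := fun m : Fin k => ((m:ℕ)+1) * p m) (fun _ _ => Nat.zero_le _) (mem_univ i)

lemma mem_bSet {k n : ℕ} {p : Fin k → ℕ} : p ∈ bSet k n ↔ Wt k p = n := by
  constructor
  · exact fun h => (mem_filter.1 h).2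
  · intro h
    refine mem_filter.2 ⟨Fintype.mem_piFinset.2 fun m => ?_, h⟩
    have := le_Wt k p m
    rw [h] at this
    have : p m ≤ n := le_trans (Nat.le_mul_of_pos_left _ (Nat.succ_pos _)) this
    simpa [Nat.lt_succ_iff] using this

lemma Wt_add (k : ℕ) (p q : Fin k → ℕ) : Wt k (p + q) = Wt k p + Wt k q := by
  simp [Wt, Nat.mul_add, Finset.sum_add_distrib]

lemma bSet_zero (k : ℕ) : bSet k 0 = {0} := by
  ext p
  simp only [mem_bSet, Wt, Finset.mem_singleton, Finset.sum_eq_zero_iff, Finset.mem_univ,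
    true_implies, Nat.mul_eq_zero, funext_iff]
  constructor
  · intro h i; have := h i; simp at this; simpa using this
  · intro h i; right; simp [h i]

lemma bellP_zero (k : ℕ) (a : Fin k → ℝ) : bellP k 0 a = 1 := by
  rw [bellP_eq, bSet_zero]
  simp

lemma bellP_congr {k n : ℕ} {a b : Fin k → ℝ} (h : ∀ i : Fin k, (i : ℕ) + 1 ≤ n → a i = b i) :
    bellP k n a = bellP k n b := by
  rw [bellP_eq, bellP_eq]
  refine Finset.sum_congr rfl fun p hp => Finset.prod_congr rfl fun m _ => ?_
  rcases Nat.eq_zero_or_pos (p m) with h0 | h0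
  · simp [h0]
  · have h1 := le_Wt k p m
    rw [mem_bSet.1 hp] at h1
    have h2 : (m : ℕ) + 1 ≤ n :=
      le_trans (by calc (m:ℕ)+1 = ((m:ℕ)+1)*1 := by ring
                   _ ≤ ((m:ℕ)+1) * p m := Nat.mul_le_mul_left _ h0) h1
    rw [h m h2]

lemma bellP_extract {k n : ℕ} (hn1 : 1 ≤ n) (hnk : n ≤ k) (a : Fin k → ℝ) :
    bellP k n a = a ⟨n - 1, by omega⟩ +
      ∑ p ∈ (bSet k n).filter (fun p => ∀ i : Fin k, p i ≠ 0 → (i : ℕ) + 1 < n),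
        ∏ m : Fin k, a m ^ p m / (Nat.factorial (p m) : ℝ) := by
  set i0 : Fin k := ⟨n - 1, by omega⟩ with hi0
  have hi0n : (i0 : ℕ) + 1 = n := by simp [hi0]; omega
  set δ : Fin k → ℕ := Pi.single i0 1 with hδ
  have hδmem : δ ∈ bSet k n := by
    rw [mem_bSet, Wt]
    rw [Finset.sum_eq_single i0]
    · simp [hδ, hi0n]
    · intro m _ hm; simp [hδ, Pi.single_eq_of_ne hm]
    · intro h; exact absurd (mem_univ i0) h
  have hδnot : δ ∉ (bSet k n).filter (fun p => ∀ i : Fin k, p i ≠ 0 → (i : ℕ) + 1 < n) := by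
    intro h
    have := (mem_filter.1 h).2 i0 (by simp [hδ])
    omega
  have hsplit : bSet k n =
      insert δ ((bSet k n).filter (fun p => ∀ i : Fin k, p i ≠ 0 → (i : ℕ) + 1 < n)) := by
    ext p
    simp only [Finset.mem_insert, mem_filter]
    constructor
    · intro hp
      by_cases hsmall : ∀ i : Fin k, p i ≠ 0 → (i : ℕ) + 1 < n
      · exact Or.inr ⟨hp, hsmall⟩
      · left
        push_neg at hsmall
        obtain ⟨i, hi, hin⟩ := hsmall
        have hW := mem_bSet.1 hp
        have h1 := le_Wt k p i
        rw [hW] at h1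
        have hposi : 0 < p i := Nat.pos_of_ne_zero hi
        have h2 : (i : ℕ) + 1 ≤ ((i : ℕ) + 1) * p i := Nat.le_mul_of_pos_right _ hposi
        have hpi : p i = 1 := Nat.eq_of_mul_eq_mul_left (Nat.succ_pos _)
          (by omega : ((i : ℕ) + 1) * p i = ((i : ℕ) + 1) * 1)
        have hii : (i : ℕ) + 1 = n := by omega
        have hrest : ∀ m : Fin k, m ≠ i → p m = 0 := by
          intro m hm
          have hsum : ∑ m ∈ Finset.univ.erase i, ((m : ℕ) + 1) * p m
              + ((i : ℕ) + 1) * p i = ∑ m : Fin k, ((m : ℕ) + 1) * p m :=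
            Finset.sum_erase_add Finset.univ (fun m : Fin k => ((m : ℕ) + 1) * p m) (mem_univ i)
          rw [← Wt, hW, hpi, mul_one] at hsum
          have hz : ∑ m ∈ Finset.univ.erase i, ((m : ℕ) + 1) * p m = 0 := by omega
          have := (Finset.sum_eq_zero_iff.1 hz) m (Finset.mem_erase.2 ⟨hm, mem_univ m⟩)
          rcases Nat.mul_eq_zero.1 this with h | h <;> omega
        have : i = i0 := Fin.ext (by omega)
        subst this
        funext m
        by_cases hm : m = i0
        · subst hm; simp [hδ, hpi]
        · rw [hrest m hm]; simp [hδ, Pi.single_eq_of_ne hm]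
    · rintro (rfl | ⟨hp, _⟩)
      · exact hδmem
      · exact hp
  rw [bellP_eq]
  conv_lhs => rw [hsplit]
  rw [Finset.sum_insert hδnot]
  congr 1
  rw [Finset.prod_eq_single i0]
  · simp [hδ]
  · intro m _ hm; simp [hδ, Pi.single_eq_of_ne hm]
  · intro h; exact absurd (mem_univ i0) h

lemma bellP_one {k : ℕ} (hk : 1 ≤ k) (a : Fin k → ℝ) : bellP k 1 a = a ⟨0, by omega⟩ := by
  rw [bellP_extract le_rfl hk]
  have : ∑ p ∈ (bSet k 1).filter (fun p => ∀ i : Fin k, p i ≠ 0 → (i : ℕ) + 1 < 1),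
      ∏ m : Fin k, a m ^ p m / (Nat.factorial (p m) : ℝ) = 0 := by
    refine Finset.sum_eq_zero fun p hp => absurd (mem_bSet.1 (mem_filter.1 hp).1) ?_
    have hz : ∀ i : Fin k, p i = 0 := fun i => by
      by_contra h; have := (mem_filter.1 hp).2 i h; omega
    simp [Wt, hz]
  rw [this, add_zero]

lemma add_pow_div_factorial (x y : ℝ) (P : ℕ) :
    (x + y) ^ P / (Nat.factorial P : ℝ) =
      ∑ j ∈ Finset.range (P + 1),
        (x ^ j / (Nat.factorial j : ℝ)) * (y ^ (P - j) / (Nat.factorial (P - j) : ℝ)) := by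
  rw [add_pow, Finset.sum_div]
  refine Finset.sum_congr rfl fun j hj => ?_
  have hjP : j ≤ P := Nat.lt_succ_iff.1 (mem_range.1 hj)
  have h1 : (Nat.factorial P : ℝ) ≠ 0 := Nat.cast_ne_zero.2 (Nat.factorial_ne_zero P)
  have h2 : (Nat.factorial j : ℝ) ≠ 0 := Nat.cast_ne_zero.2 (Nat.factorial_ne_zero j)
  have h3 : (Nat.factorial (P - j) : ℝ) ≠ 0 := Nat.cast_ne_zero.2 (Nat.factorial_ne_zero (P - j))
  rw [Nat.cast_choose ℝ hjP]
  field_simp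

lemma bellP_conv (k n : ℕ) (a b : Fin k → ℝ) :
    bellP k n (fun i => a i + b i) =
      ∑ j ∈ Finset.range (n + 1), bellP k j a * bellP k (n - j) b := by
  classical
  set g : (Fin k → ℕ) → (Fin k → ℕ) → ℝ := fun q r =>
    ∏ m : Fin k, (a m ^ q m / (Nat.factorial (q m) : ℝ)) *
      (b m ^ r m / (Nat.factorial (r m) : ℝ)) with hg
  set Pair : Finset ((Fin k → ℕ) × (Fin k → ℕ)) :=
    ((Fintype.piFinset fun _ : Fin k => Finset.range (n + 1)) ×ˢ
      (Fintype.piFinset fun _ : Fin k => Finset.range (n + 1))).filter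
      (fun z => Wt k z.1 + Wt k z.2 = n) with hPair
  have aux : ∀ q : Fin k → ℕ, Wt k q ≤ n → ∀ m : Fin k, q m ∈ Finset.range (n + 1) := by
    intro q hq m
    refine mem_range.2 (Nat.lt_succ_of_le (le_trans ?_ (le_trans (le_Wt k q m) hq)))
    exact Nat.le_mul_of_pos_left _ (Nat.succ_pos _)
  have memPair : ∀ z : (Fin k → ℕ) × (Fin k → ℕ), z ∈ Pair ↔ Wt k z.1 + Wt k z.2 = n := by
    intro z
    constructor
    · exact fun h => (mem_filter.1 h).2
    · intro h
      refine mem_filter.2 ⟨mem_product.2 ⟨?_, ?_⟩, h⟩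
      · exact Fintype.mem_piFinset.2 (aux z.1 (by omega))
      · exact Fintype.mem_piFinset.2 (aux z.2 (by omega))
  have hL : bellP k n (fun i => a i + b i) = ∑ z ∈ Pair, g z.1 z.2 := by
    rw [bellP_eq]
    have step1 : ∀ p ∈ bSet k n,
        (∏ m : Fin k, (a m + b m) ^ p m / (Nat.factorial (p m) : ℝ)) =
          ∑ q ∈ Fintype.piFinset (fun m : Fin k => Finset.range (p m + 1)),
            g q (p - q) := by
      intro p _
      rw [Finset.prod_congr rfl (fun m _ => add_pow_div_factorial (a m) (b m) (p m)),
        Finset.prod_univ_sum]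
      rfl
    rw [Finset.sum_congr rfl step1, Finset.sum_sigma']
    refine Finset.sum_nbij' (fun x => (x.2, x.1 - x.2)) (fun z => ⟨z.1 + z.2, z.1⟩) ?_ ?_ ?_ ?_ ?_
    · rintro ⟨p, q⟩ hx
      rw [Finset.mem_sigma] at hx
      obtain ⟨hp, hq⟩ := hx
      have hqp : ∀ m, q m ≤ p m := fun m =>
        Nat.lt_succ_iff.1 (mem_range.1 (Fintype.mem_piFinset.1 hq m))
      have hsum : q + (p - q) = p := funext fun m => by
        have := hqp m; simp only [Pi.add_apply, Pi.sub_apply]; omega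
      refine (memPair _).2 ?_
      show Wt k q + Wt k (p - q) = n
      rw [← Wt_add, hsum, mem_bSet.1 hp]
    · rintro ⟨q, r⟩ hz
      have hW := (memPair _).1 hz
      refine Finset.mem_sigma.2 ⟨mem_bSet.2 ?_, Fintype.mem_piFinset.2 fun m => ?_⟩
      · rw [Wt_add]; exact hW
      · exact mem_range.2 (Nat.lt_succ_of_le (by simp only [Pi.add_apply]; omega))
    · rintro ⟨p, q⟩ hx
      rw [Finset.mem_sigma] at hx
      obtain ⟨hp, hq⟩ := hx
      have hqp : ∀ m, q m ≤ p m := fun m =>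
        Nat.lt_succ_iff.1 (mem_range.1 (Fintype.mem_piFinset.1 hq m))
      have h1 : q + (p - q) = p := funext fun m => by
        have := hqp m; simp only [Pi.add_apply, Pi.sub_apply]; omega
      exact Sigma.ext (by simpa using h1) (by simp)
    · rintro ⟨q, r⟩ _
      simp only []
      have : (q + r) - q = r := funext fun m => by
        simp only [Pi.add_apply, Pi.sub_apply]; omega
      rw [this]
    · rintro ⟨p, q⟩ _
      rfl
  have hR : ∑ j ∈ Finset.range (n + 1), bellP k j a * bellP k (n - j) b =
      ∑ z ∈ Pair, g z.1 z.2 := by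
    have step1 : ∀ j ∈ Finset.range (n + 1), bellP k j a * bellP k (n - j) b =
        ∑ z ∈ bSet k j ×ˢ bSet k (n - j),
          (∏ m : Fin k, a m ^ z.1 m / (Nat.factorial (z.1 m) : ℝ)) *
          (∏ m : Fin k, b m ^ z.2 m / (Nat.factorial (z.2 m) : ℝ)) := by
      intro j _
      rw [bellP_eq, bellP_eq, Finset.sum_mul_sum, Finset.sum_product]
    rw [Finset.sum_congr rfl step1]
    have step2 : ∀ j ∈ Finset.range (n + 1),
        (∑ z ∈ bSet k j ×ˢ bSet k (n - j),
          (∏ m : Fin k, a m ^ z.1 m / (Nat.factorial (z.1 m) : ℝ)) *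
          (∏ m : Fin k, b m ^ z.2 m / (Nat.factorial (z.2 m) : ℝ))) =
        ∑ z ∈ bSet k j ×ˢ bSet k (n - j), g z.1 z.2 := by
      intro j _
      refine Finset.sum_congr rfl fun z _ => ?_
      rw [hg]
      rw [← Finset.prod_mul_distrib]
    rw [Finset.sum_congr rfl step2, Finset.sum_sigma']
    refine Finset.sum_nbij' (fun x => x.2) (fun z => ⟨Wt k z.1, z⟩) ?_ ?_ ?_ ?_ ?_
    · rintro ⟨j, q, r⟩ hx
      rw [Finset.mem_sigma, Finset.mem_product] at hx
      obtain ⟨hj, hq, hr⟩ := hx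
      have hj' : j < n + 1 := mem_range.1 hj
      refine (memPair _).2 ?_
      have h1 : Wt k q = j := mem_bSet.1 hq
      have h2 : Wt k r = n - j := mem_bSet.1 hr
      show Wt k q + Wt k r = n
      omega
    · rintro ⟨q, r⟩ hz
      have hW : Wt k q + Wt k r = n := (memPair _).1 hz
      refine Finset.mem_sigma.2 ⟨mem_range.2 (show Wt k q < n + 1 by omega),
        Finset.mem_product.2 ⟨mem_bSet.2 rfl, mem_bSet.2 (show Wt k r = n - Wt k q by omega)⟩⟩
    · rintro ⟨j, q, r⟩ hx
      rw [Finset.mem_sigma, Finset.mem_product] at hx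
      obtain ⟨hj, hq, hr⟩ := hx
      exact Sigma.ext (by simpa using mem_bSet.1 hq) (by simp)
    · rintro ⟨q, r⟩ _
      rfl
    · rintro ⟨j, q, r⟩ _
      rfl
  rw [hL, hR]

lemma residual_congr {k n : ℕ} {a b : Fin k → ℝ} (h : ∀ i : Fin k, (i : ℕ) + 1 < n → a i = b i) :
    ∑ p ∈ (bSet k n).filter (fun p => ∀ i : Fin k, p i ≠ 0 → (i : ℕ) + 1 < n),
        ∏ m : Fin k, a m ^ p m / (Nat.factorial (p m) : ℝ) =
      ∑ p ∈ (bSet k n).filter (fun p => ∀ i : Fin k, p i ≠ 0 → (i : ℕ) + 1 < n),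
        ∏ m : Fin k, b m ^ p m / (Nat.factorial (p m) : ℝ) := by
  refine Finset.sum_congr rfl fun p hp => Finset.prod_congr rfl fun m _ => ?_
  rcases Nat.eq_zero_or_pos (p m) with h0 | h0
  · simp [h0]
  · rw [h m ((mem_filter.1 hp).2 m (by omega))]

lemma exists_bell_inverse (k : ℕ) (c : ℕ → ℝ) :
    ∃ a : Fin k → ℝ, ∀ n, 1 ≤ n → n ≤ k → bellP k n a = c n := by
  suffices h : ∀ j, j ≤ k → ∃ a : Fin k → ℝ, (∀ n, 1 ≤ n → n ≤ j → bellP k n a = c n) ∧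
      (∀ i : Fin k, j ≤ (i : ℕ) → a i = 0) by
    obtain ⟨a, h1, _⟩ := h k le_rfl
    exact ⟨a, h1⟩
  intro j
  induction j with
  | zero => exact fun _ => ⟨0, fun n h1 h2 => absurd h2 (by omega), fun i _ => rfl⟩
  | succ j ih =>
    intro hjk
    obtain ⟨a, ha1, ha2⟩ := ih (by omega)
    have hj : j < k := by omega
    set i0 : Fin k := ⟨j, hj⟩ with hi0
    set x : ℝ := c (j + 1) - bellP k (j + 1) a with hx
    refine ⟨Function.update a i0 x, ?_, ?_⟩
    · intro n hn1 hn2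
      rcases Nat.lt_or_ge n (j + 1) with hlt | hge
      · rw [← ha1 n hn1 (by omega)]
        refine bellP_congr fun i hi => ?_
        refine Function.update_of_ne (fun he => ?_) _ _
        rw [he] at hi
        simp [hi0] at hi
        omega
      · have hn : n = j + 1 := by omega
        subst hn
        have hext1 := bellP_extract (by omega : 1 ≤ j + 1) hjk (Function.update a i0 x)
        have hext2 := bellP_extract (by omega : 1 ≤ j + 1) hjk a
        have hidx : (⟨j + 1 - 1, by omega⟩ : Fin k) = i0 := Fin.ext (by simp [hi0])
        rw [hidx] at hext1 hext2
        have hres := residual_congr (a := Function.update a i0 x) (b := a)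
          (n := j + 1) (fun i hi => Function.update_of_ne
            (fun he => by rw [he] at hi; simp [hi0] at hi) _ _)
        rw [hext1, hres, Function.update_self]
        have ha0 : a i0 = 0 := ha2 i0 (by simp [hi0])
        rw [hext2, ha0] at hx
        rw [hx]
        ring
    · intro i hi
      rw [Function.update_of_ne (fun he => by rw [he] at hi; simp [hi0] at hi)]
      exact ha2 i (by omega)

/-- classification of one-dimensional rough paths.  Any
one-dimensional `α`-Hölder rough path `(𝕐^n)_{n≤k}` on `[0,T]` is of the form
`𝕐^n_{s,t} = P_n^{(k)}(Y_{s,t}, F²_{s,t},…,F^k_{s,t})` for suitable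
renormalisation terms `F^2,…,F^k` with `F^m_0 = 0` and `|F^m_{s,t}| ≤ C'·(t-s)^{mα}`. -/
theorem rough_path_classification
    (T α : ℝ) (hT : 0 < T) (hα : 0 < α) (hα1 : α ≤ 1)
    (k : ℕ) (hk : k = ⌊1 / α⌋₊)
    (𝕐 : ℕ → ℝ → ℝ → ℝ) (C𝕐 : ℝ)
    (h0 : ∀ s t : ℝ, 0 ≤ s → s ≤ t → t ≤ T → 𝕐 0 s t = 1)
    (hChen : ∀ n, n ≤ k → ∀ s u t : ℝ, 0 ≤ s → s ≤ u → u ≤ t → t ≤ T →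
      𝕐 n s t = ∑ j ∈ Finset.range (n + 1), 𝕐 j s u * 𝕐 (n - j) u t)
    (hHol : ∀ n, 1 ≤ n → n ≤ k → ∀ s t : ℝ, 0 ≤ s → s ≤ t → t ≤ T →
      |𝕐 n s t| ≤ C𝕐 * (t - s) ^ ((n : ℝ) * α))
    (Y : ℝ → ℝ) (hY : ∀ t : ℝ, Y t = 𝕐 1 0 t) :
    ∃ (F : ℕ → ℝ → ℝ) (C' : ℝ),
      (∀ m, 2 ≤ m → m ≤ k → F m 0 = 0) ∧
      (∀ m, 2 ≤ m → m ≤ k → ∀ s t : ℝ, 0 ≤ s → s ≤ t → t ≤ T →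
        |F m t - F m s| ≤ C' * (t - s) ^ ((m : ℝ) * α)) ∧
      (∀ n, n ≤ k → ∀ s t : ℝ, 0 ≤ s → s ≤ t → t ≤ T →
        𝕐 n s t = bellP k n (fun i : Fin k =>
          if (i : ℕ) = 0 then Y t - Y s
          else F ((i : ℕ) + 1) t - F ((i : ℕ) + 1) s)) := by
  classical
  have hk1 : 1 ≤ k := by
    rw [hk]
    exact Nat.le_floor (by rw [Nat.cast_one, le_div_iff₀ hα]; linarith)
  -- the coordinate functions
  choose A hA using fun t : ℝ => exists_bell_inverse k (fun n => 𝕐 n 0 t)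
  -- rpow arithmetic
  have hy : ∀ (n : ℕ) (s t : ℝ), s ≤ t →
      (t - s) ^ ((n : ℝ) * α) = ((t - s) ^ α) ^ n := by
    intro n s t hst
    rw [mul_comm, Real.rpow_mul (sub_nonneg.2 hst), Real.rpow_natCast]
  -- key identity
  have key : ∀ n, n ≤ k → ∀ s t : ℝ, 0 ≤ s → s ≤ t → t ≤ T →
      𝕐 n s t = bellP k n (fun i => A t i - A s i) := by
    intro n
    induction n using Nat.strong_induction_on with
    | _ n IH =>
    intro hnk s t hs hst htT
    rcases Nat.eq_zero_or_pos n with rfl | hn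
    · rw [bellP_zero, h0 s t hs hst htT]
    · have hchen := hChen n hnk 0 s t le_rfl hs hst htT
      have hAt : (fun i => A s i + (A t i - A s i)) = A t := funext fun i => by ring
      have hconv : bellP k n (A t) = ∑ j ∈ Finset.range (n + 1),
          bellP k j (A s) * bellP k (n - j) (fun i => A t i - A s i) := by
        rw [← bellP_conv, hAt]
      rw [Finset.sum_range_succ'] at hchen hconv
      have htail : ∑ i ∈ Finset.range n, 𝕐 (i + 1) 0 s * 𝕐 (n - (i + 1)) s t =
          ∑ i ∈ Finset.range n,
            bellP k (i + 1) (A s) * bellP k (n - (i + 1)) (fun i => A t i - A s i) := by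
        refine Finset.sum_congr rfl fun i hi => ?_
        have hi' : i < n := mem_range.1 hi
        rw [hA s (i + 1) (by omega) (by omega),
          IH (n - (i + 1)) (by omega) (by omega) s t hs hst htT]
      have h0s : 𝕐 0 0 s = 1 := h0 0 s le_rfl hs (le_trans hst htT)
      have hAtn : bellP k n (A t) = 𝕐 n 0 t := hA t n hn hnk
      rw [bellP_zero] at hconv
      rw [h0s] at hchen
      rw [hAtn] at hconv
      rw [htail] at hchen
      simp only [Nat.sub_zero, one_mul] at hchen hconv
      linarith [hchen, hconv]
  -- nonnegativity of C𝕐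
  have hC𝕐 : 0 ≤ C𝕐 := by
    have h1 := hHol 1 le_rfl hk1 0 T le_rfl hT.le le_rfl
    have h3 : (0:ℝ) < (T - 0) ^ (((1:ℕ) : ℝ) * α) := by
      apply Real.rpow_pos_of_pos; linarith
    by_contra hcon
    push_neg at hcon
    nlinarith [abs_nonneg (𝕐 1 0 T)]
  -- Hölder bounds on coordinates
  have hol : ∀ N : ℕ, ∀ i : Fin k, (i : ℕ) = N → ∃ C, 0 ≤ C ∧
      ∀ s t : ℝ, 0 ≤ s → s ≤ t → t ≤ T →
        |A t i - A s i| ≤ C * ((t - s) ^ α) ^ ((i : ℕ) + 1) := by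
    intro N
    induction N using Nat.strong_induction_on with
    | _ N IH =>
    rintro i rfl
    have ihC : ∀ m : Fin k, (m : ℕ) < (i : ℕ) → ∃ C, 0 ≤ C ∧
        ∀ s t : ℝ, 0 ≤ s → s ≤ t → t ≤ T →
          |A t m - A s m| ≤ C * ((t - s) ^ α) ^ ((m : ℕ) + 1) := fun m hm => IH (m : ℕ) hm m rfl
    choose! Cf hCf0 hCfb using ihC
    set n : ℕ := (i : ℕ) + 1 with hn
    have hn1 : 1 ≤ n := by omega
    have hnk : n ≤ k := by omega
    set D : ℝ := 1 + ∑ m : Fin k, |Cf m| with hD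
    have hD1 : 1 ≤ D := le_add_of_nonneg_right (Finset.sum_nonneg fun m _ => abs_nonneg _)
    have hCfD : ∀ m : Fin k, Cf m ≤ D := fun m =>
      le_trans (le_abs_self _) (by
        rw [hD]
        have := Finset.single_le_sum (f := fun m : Fin k => |Cf m|)
          (fun m _ => abs_nonneg _) (mem_univ m)
        linarith)
    refine ⟨C𝕐 + ((n + 1) ^ k : ℕ) * D ^ n, by positivity, ?_⟩
    intro s t hs hst htT
    set y : ℝ := (t - s) ^ α with hyd
    have hy0 : 0 ≤ y := Real.rpow_nonneg (sub_nonneg.2 hst) α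
    have hkey := key n hnk s t hs hst htT
    have hextr := bellP_extract hn1 hnk (fun j => A t j - A s j)
    have hidx : (⟨n - 1, by omega⟩ : Fin k) = i := Fin.ext (by simp [hn])
    rw [hidx] at hextr
    set R : ℝ := ∑ p ∈ (bSet k n).filter (fun p => ∀ i : Fin k, p i ≠ 0 → (i : ℕ) + 1 < n),
        ∏ m : Fin k, (A t m - A s m) ^ p m / (Nat.factorial (p m) : ℝ) with hR
    have hAi : A t i - A s i = 𝕐 n s t - R := by rw [hkey, hextr]; ring
    have hYb : |𝕐 n s t| ≤ C𝕐 * y ^ n := by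
      have := hHol n hn1 hnk s t hs hst htT
      rwa [hy n s t hst] at this
    have hterm : ∀ p ∈ (bSet k n).filter (fun p => ∀ i : Fin k, p i ≠ 0 → (i : ℕ) + 1 < n),
        |∏ m : Fin k, (A t m - A s m) ^ p m / (Nat.factorial (p m) : ℝ)| ≤ D ^ n * y ^ n := by
      intro p hp
      have hWp : Wt k p = n := mem_bSet.1 (mem_filter.1 hp).1
      have hsmall := (mem_filter.1 hp).2
      have hfac : ∀ m : Fin k, |(A t m - A s m) ^ p m / (Nat.factorial (p m) : ℝ)| ≤
          (D * y ^ ((m : ℕ) + 1)) ^ p m := by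
        intro m
        rcases Nat.eq_zero_or_pos (p m) with h0' | h0'
        · simp [h0']
        · have hm : (m : ℕ) + 1 < n := hsmall m (by omega)
          have hb : |A t m - A s m| ≤ Cf m * y ^ ((m : ℕ) + 1) :=
            hCfb m (by omega) s t hs hst htT
          have hb2 : |A t m - A s m| ≤ D * y ^ ((m : ℕ) + 1) :=
            le_trans hb (mul_le_mul_of_nonneg_right (hCfD m) (pow_nonneg hy0 _))
          have hfle : (1 : ℝ) ≤ (Nat.factorial (p m) : ℝ) := by
            exact_mod_cast Nat.one_le_iff_ne_zero.2 (Nat.factorial_ne_zero _)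
          calc |(A t m - A s m) ^ p m / (Nat.factorial (p m) : ℝ)|
              = |A t m - A s m| ^ p m / (Nat.factorial (p m) : ℝ) := by
                rw [abs_div, abs_pow, Nat.abs_cast]
            _ ≤ |A t m - A s m| ^ p m := by
                apply div_le_self (pow_nonneg (abs_nonneg _) _) hfle
            _ ≤ (D * y ^ ((m : ℕ) + 1)) ^ p m := pow_le_pow_left₀ (abs_nonneg _) hb2 _
      calc |∏ m : Fin k, (A t m - A s m) ^ p m / (Nat.factorial (p m) : ℝ)|
          = ∏ m : Fin k, |(A t m - A s m) ^ p m / (Nat.factorial (p m) : ℝ)| :=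
            Finset.abs_prod _ _
        _ ≤ ∏ m : Fin k, (D * y ^ ((m : ℕ) + 1)) ^ p m :=
            Finset.prod_le_prod (fun m _ => abs_nonneg _) (fun m _ => hfac m)
        _ = (∏ m : Fin k, D ^ p m) * ∏ m : Fin k, (y ^ ((m : ℕ) + 1)) ^ p m := by
            rw [← Finset.prod_mul_distrib]
            exact Finset.prod_congr rfl fun m _ => mul_pow _ _ _
        _ = D ^ (∑ m : Fin k, p m) * y ^ (∑ m : Fin k, ((m : ℕ) + 1) * p m) := by
            rw [Finset.prod_pow_eq_pow_sum]
            congr 1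
            rw [← Finset.prod_pow_eq_pow_sum]
            exact Finset.prod_congr rfl fun m _ => by rw [← pow_mul]
        _ ≤ D ^ n * y ^ n := by
            rw [show (∑ m : Fin k, ((m : ℕ) + 1) * p m) = n from hWp]
            refine mul_le_mul_of_nonneg_right ?_ (pow_nonneg hy0 _)
            refine pow_le_pow_right₀ hD1 ?_
            calc ∑ m : Fin k, p m ≤ ∑ m : Fin k, ((m : ℕ) + 1) * p m :=
                  Finset.sum_le_sum fun m _ => Nat.le_mul_of_pos_left _ (Nat.succ_pos _)
              _ = n := hWp
    have hRb : |R| ≤ ((n + 1) ^ k : ℕ) * (D ^ n * y ^ n) := by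
      have h1 : |R| ≤ ∑ p ∈ (bSet k n).filter (fun p => ∀ i : Fin k, p i ≠ 0 → (i : ℕ) + 1 < n),
          |∏ m : Fin k, (A t m - A s m) ^ p m / (Nat.factorial (p m) : ℝ)| :=
        Finset.abs_sum_le_sum_abs _ _
      have h2 := Finset.sum_le_card_nsmul _ _ _ hterm
      have hcard : ((bSet k n).filter
          (fun p => ∀ i : Fin k, p i ≠ 0 → (i : ℕ) + 1 < n)).card ≤ (n + 1) ^ k := by
        refine le_trans (Finset.card_le_card (Finset.filter_subset _ _)) ?_
        refine le_trans (Finset.card_le_card (Finset.filter_subset _ _)) ?_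
        rw [Fintype.card_piFinset]
        simp [Finset.card_range]
      rw [nsmul_eq_mul] at h2
      have h3 : (((bSet k n).filter
          (fun p => ∀ i : Fin k, p i ≠ 0 → (i : ℕ) + 1 < n)).card : ℝ) ≤ ((n + 1) ^ k : ℕ) := by
        exact_mod_cast hcard
      have h4 : (0:ℝ) ≤ D ^ n * y ^ n := by positivity
      calc |R| ≤ _ := h1
        _ ≤ _ := h2
        _ ≤ ((n + 1) ^ k : ℕ) * (D ^ n * y ^ n) := mul_le_mul_of_nonneg_right h3 h4
    calc |A t i - A s i| = |𝕐 n s t - R| := by rw [hAi]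
      _ ≤ |𝕐 n s t| + |R| := abs_sub _ _
      _ ≤ C𝕐 * y ^ n + ((n + 1) ^ k : ℕ) * (D ^ n * y ^ n) := add_le_add hYb hRb
      _ = (C𝕐 + ((n + 1) ^ k : ℕ) * D ^ n) * y ^ n := by ring
  have hol' : ∀ i : Fin k, ∃ C, 0 ≤ C ∧ ∀ s t : ℝ, 0 ≤ s → s ≤ t → t ≤ T →
      |A t i - A s i| ≤ C * ((t - s) ^ α) ^ ((i : ℕ) + 1) := fun i => hol (i : ℕ) i rfl
  choose C0 hC00 hC0b using hol'
  set F : ℕ → ℝ → ℝ := fun m t => if h : m - 1 < k then A t ⟨m - 1, h⟩ - A 0 ⟨m - 1, h⟩ else 0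
    with hF
  refine ⟨F, ∑ i : Fin k, C0 i, ?_, ?_, ?_⟩
  · intro m _ _
    simp only [hF]
    split <;> simp
  · intro m hm2 hmk s t hs hst htT
    have hm1k : m - 1 < k := by omega
    have hFd : ∀ u : ℝ, F m u = A u ⟨m - 1, hm1k⟩ - A 0 ⟨m - 1, hm1k⟩ := by
      intro u; simp only [hF]; rw [dif_pos hm1k]
    rw [hFd t, hFd s, hy m s t hst]
    have hb := hC0b ⟨m - 1, hm1k⟩ s t hs hst htT
    have hidx : (⟨m - 1, hm1k⟩ : Fin k).1 + 1 = m := by simp; omega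
    rw [hidx] at hb
    have hle : C0 ⟨m - 1, hm1k⟩ ≤ ∑ i : Fin k, C0 i :=
      Finset.single_le_sum (f := fun i => C0 i) (fun i _ => hC00 i) (mem_univ _)
    have hy0 : (0:ℝ) ≤ ((t - s) ^ α) ^ m := pow_nonneg (Real.rpow_nonneg (sub_nonneg.2 hst) α) m
    calc |A t ⟨m - 1, hm1k⟩ - A 0 ⟨m - 1, hm1k⟩ - (A s ⟨m - 1, hm1k⟩ - A 0 ⟨m - 1, hm1k⟩)|
        = |A t ⟨m - 1, hm1k⟩ - A s ⟨m - 1, hm1k⟩| := by ring_nf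
      _ ≤ C0 ⟨m - 1, hm1k⟩ * ((t - s) ^ α) ^ m := hb
      _ ≤ (∑ i : Fin k, C0 i) * ((t - s) ^ α) ^ m := mul_le_mul_of_nonneg_right hle hy0
  · intro n hnk s t hs hst htT
    have hvec : (fun i : Fin k => if (i : ℕ) = 0 then Y t - Y s
        else F ((i : ℕ) + 1) t - F ((i : ℕ) + 1) s) = fun i => A t i - A s i := by
      funext i
      by_cases hi : (i : ℕ) = 0
      · have hi' : i = ⟨0, by omega⟩ := Fin.ext hi
        have hAt0 : ∀ u : ℝ, A u ⟨0, by omega⟩ = Y u := by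
          intro u
          rw [hY u, ← hA u 1 le_rfl hk1, bellP_one hk1]
        rw [if_pos hi, hi', hAt0 t, hAt0 s]
      · have h1 : (i : ℕ) + 1 - 1 < k := by omega
        have hFd : ∀ u : ℝ, F ((i : ℕ) + 1) u = A u i - A 0 i := by
          intro u
          simp only [hF]
          rw [dif_pos h1]
          congr 1 <;> exact congrArg _ (Fin.ext (by simp))
        rw [if_neg hi, hFd t, hFd s]
        ring
    rw [hvec]
    exact key n hnk s t hs hst htT
end

section
/- Existence of the rough integral (Proposition 2.1, one-dimensional case): Let (𝕏^n)_{n ≤ k} be a one-dimensional α-Hölder rough path on [0,T] and (Y^{(1)}, …, Y^{(k)}) a controlled path. Then for every 0 ≤ s ≤ t ≤ T the compensated Riemann sums converge: there exists a real number I_{s,t} such that for every ε > 0 there is δ > 0 such that for every partition s = t_0 < t_1 < ⋯ < t_N = t of [s,t] with mesh < δ one has |∑_{m=0}^{N−1} ∑_{i=1}^{k} Y^{(i)}_{t_m} · 𝕏^i_{t_m, t_{m+1}} − I_{s,t}| < ε. Moreover there is a constant K (depending only on k, α, T and the rough-path and controlled-path constants) such that |I_{s,t} − ∑_{i=1}^{k}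 Y^{(i)}_s · 𝕏^i_{s,t}| ≤ K·(t−s)^{(k+1)α} for all 0 ≤ s ≤ t ≤ T. The number I_{s,t} is the rough integral ∫_s^t Y d𝕏. -/
/-!
The germ `A s t = ∑_{i=1}^k Y^{(i)}_s 𝕏^i_{s,t}` is almost additive: by Chen's relation its defect
`A s t - A s u - A u t` equals `-∑_m R^{(m)}_{s,u} 𝕏^m_{u,t}`, where the `R^{(m)}` are the
remainders of the controlled path, so it is `O((t - s)^θ)` with `θ = (k + 1)α > 1`, which is where
`k = ⌊1/α⌋` enters.

Sewing then follows Young: in a partition of `[s,t]` into `N + 1` intervals some point has its two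
neighbours within `2(t - s)/N` of each other, and removing it changes the Riemann sum by at most
`C (2(t - s)/N)^θ`; removing points one at a time gives `|∑_π A - A s t| ≤ C 2^θ ζ(θ) (t - s)^θ`.
Applied to each interval of a partition inside a common refinement, this shows that two Riemann sums
of mesh `≤ δ` differ by `O(δ^(θ-1) (t - s))`, so the sums along uniform partitions are Cauchy and
their limit is the integral.
-/

open Finset Filter Topology

def riemannSum (A : ℝ → ℝ → ℝ) (π : ℕ → ℝ) (N : ℕ) : ℝ :=
  ∑ m ∈ range N, A (π m) (π (m + 1))

lemma riemannSum_succ (A : ℝ → ℝ → ℝ) (π : ℕ → ℝ) (N : ℕ) :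
    riemannSum A π (N + 1) = riemannSum A π N + A (π N) (π (N + 1)) :=
  sum_range_succ _ _

lemma strictMonoOn_Iic_of_forall_lt_succ {π : ℕ → ℝ} {N : ℕ} (hπ : ∀ m < N, π m < π (m + 1)) :
    StrictMonoOn π (Set.Iic N) :=
  strictMonoOn_Iic_of_lt_succ fun m hm => by simpa using hπ m hm

lemma riemannSum_sub_riemannSum_skip (A : ℝ → ℝ → ℝ) (π : ℕ → ℝ) (m j : ℕ) :
    riemannSum A π (m + j + 1 + 1)
        - riemannSum A (fun l => π (if l ≤ m then l else l + 1)) (m + j + 1)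
      = A (π m) (π (m + 1)) + A (π (m + 1)) (π (m + 2)) - A (π m) (π (m + 2)) := by
  induction j with
  | zero =>
    have hhead : riemannSum A (fun l => π (if l ≤ m then l else l + 1)) m = riemannSum A π m :=
      sum_congr rfl fun l hl => by
        rw [mem_range] at hl
        simp only [if_pos hl.le, if_pos (Nat.succ_le_of_lt hl)]
    simp only [add_zero, riemannSum_succ, hhead, le_refl, if_true, if_neg (Nat.not_succ_le_self m)]
    ring
  | succ j ih =>
    rw [show m + (j + 1) + 1 = m + j + 1 + 1 by omega, riemannSum_succ A π (m + j + 1 + 1),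
      riemannSum_succ A (fun l => π (if l ≤ m then l else l + 1)) (m + j + 1)]
    simp only [show ¬m + j + 1 ≤ m by omega, show ¬m + j + 1 + 1 ≤ m by omega, if_false]
    linear_combination ih

lemma exists_two_step_increment_le {π : ℕ → ℝ} {N : ℕ} (hπ : MonotoneOn π (Set.Iic (N + 2))) :
    ∃ m ≤ N, π (m + 2) - π m ≤ 2 * (π (N + 2) - π 0) / (N + 1) := by
  have htotal : ∑ m ∈ range (N + 1), (π (m + 2) - π m)
      ≤ ∑ _m ∈ range (N + 1), 2 * (π (N + 2) - π 0) / (N + 1) := by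
    have h1 := sum_range_sub (fun m => π (m + 1)) (N + 1)
    have h2 := sum_range_sub π (N + 1)
    have h01 : π 0 ≤ π 1 := hπ (by simp) (by simp) (by omega)
    have hN : π (N + 1) ≤ π (N + 2) := hπ (by simp) (by simp) (by omega)
    rw [sum_const, card_range, nsmul_eq_mul, Nat.cast_succ, mul_div_cancel₀ _ (by positivity)]
    calc ∑ m ∈ range (N + 1), (π (m + 2) - π m)
        = ∑ m ∈ range (N + 1), ((π (m + 1 + 1) - π (m + 1)) + (π (m + 1) - π m)) :=
          sum_congr rfl fun m _ => by ring
      _ ≤ 2 * (π (N + 2) - π 0) := by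
          rw [sum_add_distrib, h1, h2]
          linarith
  obtain ⟨m, hm, hle⟩ := exists_le_of_sum_le nonempty_range_add_one htotal
  exact ⟨m, by simpa [Nat.lt_succ_iff] using hm, hle⟩

lemma riemannSum_eq_sum_blocks (A : ℝ → ℝ → ℝ) (ρ : ℕ → ℝ) {σ : ℕ → ℕ} {N : ℕ} (hσ0 : σ 0 = 0)
    (hσ : ∀ m < N, σ m ≤ σ (m + 1)) :
    riemannSum A ρ (σ N)
      = ∑ m ∈ range N, riemannSum A (fun l => ρ (σ m + l)) (σ (m + 1) - σ m) := by
  induction N with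
  | zero => simp [hσ0, riemannSum]
  | succ N ih =>
    rw [sum_range_succ, ← ih fun m hm => hσ m (by omega)]
    simp only [riemannSum]
    rw [← Nat.add_sub_of_le (hσ N (by omega)), sum_range_add, Nat.add_sub_cancel_left]
    rfl

lemma exists_index_of_subset {ρ π : ℕ → ℝ} {n N : ℕ} (hρ : StrictMonoOn ρ (Set.Iic n))
    (hπ : StrictMonoOn π (Set.Iic N)) (hsub : ∀ m ≤ N, ∃ l ≤ n, ρ l = π m)
    (h0 : ρ 0 = π 0) (hN : ρ n = π N) :
    ∃ σ : ℕ → ℕ, σ 0 = 0 ∧ σ N = n ∧ StrictMonoOn σ (Set.Iic N) ∧ ∀ m ≤ N, ρ (σ m) = π m := by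
  choose! σ hσn hρσ using hsub
  refine ⟨σ,
    hρ.injOn (hσn 0 (Nat.zero_le N)) (Nat.zero_le n) ((hρσ 0 (Nat.zero_le N)).trans h0.symm),
    hρ.injOn (hσn N le_rfl) (le_refl n) ((hρσ N le_rfl).trans hN.symm),
    fun a ha b hb hab => ?_, hρσ⟩
  rw [← hρ.lt_iff_lt (hσn a ha) (hσn b hb), hρσ a ha, hρσ b hb]
  exact hπ ha hb hab

lemma exists_strictMonoOn_enumeration (F : Finset ℝ) (hF : F.Nonempty) :
    ∃ (n : ℕ) (ρ : ℕ → ℝ), StrictMonoOn ρ (Set.Iic n) ∧ ∀ x, x ∈ F ↔ ∃ l ≤ n, ρ l = x := by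
  obtain ⟨n, hn⟩ : ∃ n, F.card = n + 1 := ⟨F.card - 1, by have := hF.card_pos; omega⟩
  have hclamp : ∀ l ≤ n, (Fin.clamp l n : ℕ) = l := fun l hl => min_eq_left hl
  refine ⟨n, fun l => F.orderEmbOfFin hn (Fin.clamp l n), fun a ha b hb hab => ?_,
    fun x => ⟨?_, ?_⟩⟩
  · exact (F.orderEmbOfFin hn).strictMono (Fin.lt_def.2 (by rwa [hclamp a ha, hclamp b hb]))
  · intro hx
    obtain ⟨i, rfl⟩ : x ∈ Set.range (F.orderEmbOfFin hn) := by rwa [range_orderEmbOfFin]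
    exact ⟨i, Nat.lt_succ_iff.1 i.isLt, congrArg _ (Fin.ext (hclamp i (Nat.lt_succ_iff.1 i.isLt)))⟩
  · rintro ⟨l, -, rfl⟩
    exact F.orderEmbOfFin_mem hn _

lemma exists_common_refinement {π₁ π₂ : ℕ → ℝ} {N₁ N₂ : ℕ} {s t : ℝ}
    (hπ₁ : StrictMonoOn π₁ (Set.Iic N₁)) (hπ₂ : StrictMonoOn π₂ (Set.Iic N₂))
    (h₁0 : π₁ 0 = s) (h₁N : π₁ N₁ = t) (h₂0 : π₂ 0 = s) (h₂N : π₂ N₂ = t) :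
    ∃ (n : ℕ) (ρ : ℕ → ℝ), StrictMonoOn ρ (Set.Iic n) ∧ ρ 0 = s ∧ ρ n = t ∧
      (∀ m ≤ N₁, ∃ l ≤ n, ρ l = π₁ m) ∧ ∀ m ≤ N₂, ∃ l ≤ n, ρ l = π₂ m := by
  classical
  set F := (range (N₁ + 1)).image π₁ ∪ (range (N₂ + 1)).image π₂
  have hF₁ : ∀ m ≤ N₁, π₁ m ∈ F := fun m hm =>
    mem_union_left _ (mem_image_of_mem _ (mem_range.2 (Nat.lt_succ_of_le hm)))
  have hF₂ : ∀ m ≤ N₂, π₂ m ∈ F := fun m hm =>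
    mem_union_right _ (mem_image_of_mem _ (mem_range.2 (Nat.lt_succ_of_le hm)))
  have hF_bounds : ∀ x ∈ F, s ≤ x ∧ x ≤ t := by
    intro x hx
    rcases mem_union.1 hx with hx | hx <;> obtain ⟨m, hm, rfl⟩ := mem_image.1 hx <;>
      rw [mem_range, Nat.lt_succ_iff] at hm
    · exact ⟨h₁0 ▸ hπ₁.monotoneOn (by simp) hm (Nat.zero_le m),
        h₁N ▸ hπ₁.monotoneOn hm (by simp) hm⟩
    · exact ⟨h₂0 ▸ hπ₂.monotoneOn (by simp) hm (Nat.zero_le m),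
        h₂N ▸ hπ₂.monotoneOn hm (by simp) hm⟩
  obtain ⟨n, ρ, hρ, hmem⟩ := exists_strictMonoOn_enumeration F ⟨s, h₁0 ▸ hF₁ 0 (Nat.zero_le _)⟩
  have hsub₁ : ∀ m ≤ N₁, ∃ l ≤ n, ρ l = π₁ m := fun m hm => (hmem _).1 (hF₁ m hm)
  have hρF : ∀ l ≤ n, ρ l ∈ F := fun l hl => (hmem _).2 ⟨l, hl, rfl⟩
  refine ⟨n, ρ, hρ, ?_, ?_, hsub₁, fun m hm => (hmem _).1 (hF₂ m hm)⟩
  · obtain ⟨l, hl, hρl⟩ := hsub₁ 0 (Nat.zero_le _)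
    exact le_antisymm (h₁0 ▸ hρl ▸ hρ.monotoneOn (by simp) hl (Nat.zero_le l))
      (hF_bounds _ (hρF 0 (Nat.zero_le n))).1
  · obtain ⟨l, hl, hρl⟩ := hsub₁ N₁ le_rfl
    exact le_antisymm (hF_bounds _ (hρF n le_rfl)).2 (h₁N ▸ hρl ▸ hρ.monotoneOn hl (by simp) hl)

lemma exists_uniform_partitions {s t : ℝ} (hst : s < t) :
    ∃ P : ℕ → ℕ → ℝ, ∀ n, StrictMonoOn (P n) (Set.Iic (n + 1)) ∧ P n 0 = s ∧ P n (n + 1) = t ∧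
      ∀ m < n + 1, P n (m + 1) - P n m ≤ (t - s) / (n + 1) := by
  have hts : 0 < t - s := sub_pos.2 hst
  refine ⟨fun n m => s + (t - s) * m / (n + 1), fun n => ⟨fun a _ b _ hab => ?_, by simp, ?_,
    fun m _ => le_of_eq ?_⟩⟩
  · dsimp only
    gcongr
  · push_cast
    field_simp
    ring
  · push_cast
    ring

lemma rpow_le_rpow_sub_one_mul {x δ θ : ℝ} (hx : 0 ≤ x) (hxδ : x ≤ δ) (hθ : 1 ≤ θ) :
    x ^ θ ≤ δ ^ (θ - 1) * x := by
  calc x ^ θ = x ^ (θ - 1) * x := by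
        rw [← Real.rpow_add_one' hx (by linarith), sub_add_cancel]
    _ ≤ δ ^ (θ - 1) * x := by gcongr

def HasDefectBound (A : ℝ → ℝ → ℝ) (T C θ : ℝ) : Prop :=
  ∀ s u t, 0 ≤ s → s ≤ u → u ≤ t → t ≤ T → |A s t - A s u - A u t| ≤ C * (t - s) ^ θ

-- The `n = 0` term is `0⁻¹ = 0`, so the series is `ζ(θ)`.
noncomputable def sewingConst (C θ : ℝ) : ℝ :=
  C * 2 ^ θ * ∑' n : ℕ, ((n : ℝ) ^ θ)⁻¹

lemma sewingConst_nonneg {C : ℝ} (hC : 0 ≤ C) (θ : ℝ) : 0 ≤ sewingConst C θ :=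
  mul_nonneg (by positivity) (tsum_nonneg fun _ => by positivity)

section Sewing

variable {A : ℝ → ℝ → ℝ} {T C θ : ℝ}

lemma abs_riemannSum_sub_riemannSum_skip_le (hA : HasDefectBound A T C θ) {π : ℕ → ℝ} {m j : ℕ}
    (hπ : MonotoneOn π (Set.Iic (m + j + 1 + 1))) (h0 : 0 ≤ π 0) (hT : π (m + j + 1 + 1) ≤ T) :
    |riemannSum A π (m + j + 1 + 1)
        - riemannSum A (fun l => π (if l ≤ m then l else l + 1)) (m + j + 1)|
      ≤ C * (π (m + 2) - π m) ^ θ := by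
  have hmono : ∀ a b, a ≤ b → b ≤ m + j + 1 + 1 → π a ≤ π b :=
    fun a b hab hb => hπ (hab.trans hb) hb hab
  rw [riemannSum_sub_riemannSum_skip, ← abs_neg, neg_sub, ← sub_sub]
  exact hA _ _ _ (h0.trans (hmono 0 m (by omega) (by omega))) (hmono _ _ (by omega) (by omega))
    (hmono _ _ (by omega) (by omega)) ((hmono _ _ (by omega) le_rfl).trans hT)

lemma abs_riemannSum_sub_le_sum (hA : HasDefectBound A T C θ) (hC : 0 ≤ C) (hθ : 0 ≤ θ)
    (N : ℕ) {π : ℕ → ℝ} (hπ : StrictMonoOn π (Set.Iic (N + 1))) (h0 : 0 ≤ π 0)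
    (hT : π (N + 1) ≤ T) :
    |riemannSum A π (N + 1) - A (π 0) (π (N + 1))|
      ≤ C * (2 * (π (N + 1) - π 0)) ^ θ * ∑ n ∈ Icc 1 N, ((n : ℝ) ^ θ)⁻¹ := by
  induction N generalizing π with
  | zero => simp [riemannSum]
  | succ N ih =>
    obtain ⟨m, hmN, hgap⟩ := exists_two_step_increment_le hπ.monotoneOn
    obtain ⟨j, rfl⟩ : ∃ j, N = m + j := ⟨N - m, by omega⟩
    set π' := fun l => π (if l ≤ m then l else l + 1)
    have hπ' : StrictMonoOn π' (Set.Iic (m + j + 1)) :=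
      hπ.comp ((strictMono_nat_of_lt_succ fun l => by split_ifs <;> omega).strictMonoOn _)
        fun l hl => by
          simp only [Set.mem_Iic] at hl ⊢
          split_ifs <;> omega
    have hIH := ih hπ' (by simpa [π'] using h0)
      (by simpa [π', show ¬m + j + 1 ≤ m by omega] using hT)
    simp only [π', show ¬m + j + 1 ≤ m by omega, if_false] at hIH
    have hlen : 0 ≤ π (m + j + 1 + 1) - π 0 :=
      sub_nonneg.2 (hπ.monotoneOn (by simp) (by simp) (Nat.zero_le _))
    have hstep : |riemannSum A π (m + j + 1 + 1) - riemannSum A π' (m + j + 1)|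
        ≤ C * (2 * (π (m + j + 1 + 1) - π 0) / (m + j + 1)) ^ θ := by
      refine (abs_riemannSum_sub_riemannSum_skip_le hA hπ.monotoneOn h0 hT).trans ?_
      gcongr
      · exact sub_nonneg.2 (hπ.monotoneOn (by simp; omega) (by simp) (by omega))
      · push_cast at hgap ⊢
        linarith
    calc |riemannSum A π (m + j + 1 + 1) - A (π 0) (π (m + j + 1 + 1))|
        ≤ |riemannSum A π (m + j + 1 + 1) - riemannSum A π' (m + j + 1)|
          + |riemannSum A π' (m + j + 1) - A (π 0) (π (m + j + 1 + 1))| := abs_sub_le _ _ _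
      _ ≤ C * (2 * (π (m + j + 1 + 1) - π 0) / (m + j + 1)) ^ θ
          + C * (2 * (π (m + j + 1 + 1) - π 0)) ^ θ * ∑ n ∈ Icc 1 (m + j), ((n : ℝ) ^ θ)⁻¹ :=
          add_le_add hstep hIH
      _ = C * (2 * (π (m + j + 1 + 1) - π 0)) ^ θ
          * ∑ n ∈ Icc 1 (m + j + 1), ((n : ℝ) ^ θ)⁻¹ := by
        rw [sum_Icc_succ_top (by omega), Real.div_rpow (by linarith) (by positivity)]
        push_cast
        ring

lemma abs_riemannSum_sub_le (hA : HasDefectBound A T C θ) (hC : 0 ≤ C) (hθ : 1 < θ)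
    {N : ℕ} (hN : 0 < N) {π : ℕ → ℝ} (hπ : StrictMonoOn π (Set.Iic N)) (h0 : 0 ≤ π 0)
    (hT : π N ≤ T) :
    |riemannSum A π N - A (π 0) (π N)| ≤ sewingConst C θ * (π N - π 0) ^ θ := by
  obtain ⟨N, rfl⟩ : ∃ M, N = M + 1 := ⟨N - 1, by omega⟩
  have hlen : 0 ≤ π (N + 1) - π 0 := sub_nonneg.2 (hπ.monotoneOn (by simp) (by simp) (by omega))
  refine (abs_riemannSum_sub_le_sum hA hC (by linarith) N hπ h0 hT).trans ?_
  rw [Real.mul_rpow zero_le_two hlen, sewingConst]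
  calc C * (2 ^ θ * (π (N + 1) - π 0) ^ θ) * ∑ n ∈ Icc 1 N, ((n : ℝ) ^ θ)⁻¹
      ≤ C * (2 ^ θ * (π (N + 1) - π 0) ^ θ) * ∑' n : ℕ, ((n : ℝ) ^ θ)⁻¹ := by
        gcongr
        exact (Real.summable_nat_rpow_inv.2 hθ).sum_le_tsum _ fun n _ => by positivity
    _ = C * 2 ^ θ * (∑' n : ℕ, ((n : ℝ) ^ θ)⁻¹) * (π (N + 1) - π 0) ^ θ := by ring

lemma abs_riemannSum_sub_riemannSum_of_subset_le (hA : HasDefectBound A T C θ) (hC : 0 ≤ C)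
    (hθ : 1 < θ) {ρ π : ℕ → ℝ} {n N : ℕ} (hρ : StrictMonoOn ρ (Set.Iic n))
    (hπ : StrictMonoOn π (Set.Iic N)) (hsub : ∀ m ≤ N, ∃ l ≤ n, ρ l = π m)
    (h0 : ρ 0 = π 0) (hN : ρ n = π N) (hπ0 : 0 ≤ π 0) (hT : π N ≤ T) {δ : ℝ}
    (hmesh : ∀ m < N, π (m + 1) - π m ≤ δ) :
    |riemannSum A ρ n - riemannSum A π N| ≤ sewingConst C θ * δ ^ (θ - 1) * (π N - π 0) := by
  obtain ⟨σ, hσ0, rfl, hσ, hρσ⟩ := exists_index_of_subset hρ hπ hsub h0 hN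
  have hσ_succ : ∀ m < N, σ m < σ (m + 1) := fun m hm =>
    hσ (by simp; omega) (by simp; omega) (by omega)
  have hπ_succ : ∀ m < N, π m < π (m + 1) := fun m hm =>
    hπ (by simp; omega) (by simp; omega) (by omega)
  have hπ_mono := hπ.monotoneOn
  have hblock : ∀ m < N,
      |riemannSum A (fun l => ρ (σ m + l)) (σ (m + 1) - σ m) - A (π m) (π (m + 1))|
        ≤ sewingConst C θ * δ ^ (θ - 1) * (π (m + 1) - π m) := by
    intro m hm
    have hshift : StrictMonoOn (fun l => ρ (σ m + l)) (Set.Iic (σ (m + 1) - σ m)) :=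
      hρ.comp (fun _ _ _ _ h => Nat.add_lt_add_left h _) fun l hl => by
        simp only [Set.mem_Iic] at hl ⊢
        have := hσ.monotoneOn (by simp; omega) (by simp) (show m + 1 ≤ N by omega)
        have := hσ_succ m hm
        omega
    have h := abs_riemannSum_sub_le hA hC hθ (Nat.sub_pos_of_lt (hσ_succ m hm)) hshift
      (by simpa [hρσ m hm.le] using hπ0.trans (hπ_mono (by simp) (by simp; omega) (Nat.zero_le m)))
      (by simpa [Nat.add_sub_cancel' (hσ_succ m hm).le, hρσ (m + 1) hm]
        using (hπ_mono (by simp; omega) (by simp) hm).trans hT)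
    simp only [add_zero, Nat.add_sub_cancel' (hσ_succ m hm).le, hρσ m hm.le, hρσ (m + 1) hm] at h
    rw [mul_assoc]
    exact h.trans (mul_le_mul_of_nonneg_left (rpow_le_rpow_sub_one_mul
      (sub_nonneg.2 (hπ_succ m hm).le) (hmesh m hm) hθ.le)
      (sewingConst_nonneg hC θ))
  rw [riemannSum_eq_sum_blocks A ρ hσ0 fun m hm => (hσ_succ m hm).le, riemannSum, ← sum_sub_distrib]
  calc |∑ m ∈ range N,
          (riemannSum A (fun l => ρ (σ m + l)) (σ (m + 1) - σ m) - A (π m) (π (m + 1)))|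
      ≤ ∑ m ∈ range N, sewingConst C θ * δ ^ (θ - 1) * (π (m + 1) - π m) :=
        (abs_sum_le_sum_abs _ _).trans (sum_le_sum fun m hm => hblock m (mem_range.1 hm))
    _ = sewingConst C θ * δ ^ (θ - 1) * (π N - π 0) := by rw [← mul_sum, sum_range_sub]

lemma abs_riemannSum_sub_riemannSum_le (hA : HasDefectBound A T C θ) (hC : 0 ≤ C) (hθ : 1 < θ)
    {π₁ π₂ : ℕ → ℝ} {N₁ N₂ : ℕ} {s t δ₁ δ₂ : ℝ}
    (hπ₁ : StrictMonoOn π₁ (Set.Iic N₁)) (hπ₂ : StrictMonoOn π₂ (Set.Iic N₂))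
    (h₁0 : π₁ 0 = s) (h₁N : π₁ N₁ = t) (h₂0 : π₂ 0 = s) (h₂N : π₂ N₂ = t) (hs : 0 ≤ s)
    (ht : t ≤ T) (hmesh₁ : ∀ m < N₁, π₁ (m + 1) - π₁ m ≤ δ₁)
    (hmesh₂ : ∀ m < N₂, π₂ (m + 1) - π₂ m ≤ δ₂) :
    |riemannSum A π₁ N₁ - riemannSum A π₂ N₂|
      ≤ sewingConst C θ * (δ₁ ^ (θ - 1) + δ₂ ^ (θ - 1)) * (t - s) := by
  obtain ⟨n, ρ, hρ, hρ0, hρn, hsub₁, hsub₂⟩ := exists_common_refinement hπ₁ hπ₂ h₁0 h₁N h₂0 h₂N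
  have h₁ := abs_riemannSum_sub_riemannSum_of_subset_le hA hC hθ hρ hπ₁ hsub₁
    (hρ0.trans h₁0.symm) (hρn.trans h₁N.symm) (h₁0 ▸ hs) (h₁N ▸ ht) hmesh₁
  have h₂ := abs_riemannSum_sub_riemannSum_of_subset_le hA hC hθ hρ hπ₂ hsub₂
    (hρ0.trans h₂0.symm) (hρn.trans h₂N.symm) (h₂0 ▸ hs) (h₂N ▸ ht) hmesh₂
  rw [h₁0, h₁N] at h₁
  rw [h₂0, h₂N] at h₂
  calc |riemannSum A π₁ N₁ - riemannSum A π₂ N₂|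
      ≤ |riemannSum A ρ n - riemannSum A π₁ N₁| + |riemannSum A ρ n - riemannSum A π₂ N₂| := by
        rw [abs_sub_comm (riemannSum A ρ n)]
        exact abs_sub_le _ _ _
    _ ≤ _ := add_le_add h₁ h₂
    _ = _ := by ring

lemma exists_abs_riemannSum_sub_le (hA : HasDefectBound A T C θ) (hC : 0 ≤ C) (hθ : 1 < θ)
    {s t : ℝ} (hs : 0 ≤ s) (hst : s < t) (ht : t ≤ T) :
    ∃ L : ℝ, (∀ (δ : ℝ) (N : ℕ) (π : ℕ → ℝ), StrictMonoOn π (Set.Iic N) → π 0 = s → π N = t →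
        (∀ m < N, π (m + 1) - π m ≤ δ) →
        |riemannSum A π N - L| ≤ sewingConst C θ * δ ^ (θ - 1) * (t - s)) ∧
      |L - A s t| ≤ sewingConst C θ * (t - s) ^ θ := by
  obtain ⟨P, hP⟩ := exists_uniform_partitions hst
  set h : ℕ → ℝ := fun n => (t - s) / (n + 1)
  set u : ℕ → ℝ := fun n => riemannSum A (P n) (n + 1)
  have hh : Tendsto (fun n => h n ^ (θ - 1)) atTop (𝓝 0) := by
    refine Tendsto.rpow_const_nhds_zero ?_ (by linarith)
    simpa [h, Function.comp_def] using
      (tendsto_const_div_atTop_nhds_zero_nat (t - s)).comp (tendsto_add_atTop_nat 1)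
  have hcauchy : CauchySeq u := by
    refine cauchySeq_of_le_tendsto_0
      (fun n => sewingConst C θ * (h n ^ (θ - 1) + h n ^ (θ - 1)) * (t - s))
      (fun n₁ n₂ n hn₁ hn₂ => ?_)
      (by simpa using ((hh.add hh).const_mul (sewingConst C θ)).mul_const (t - s))
    have hmesh : ∀ {n'}, n ≤ n' → ∀ m < n' + 1, P n' (m + 1) - P n' m ≤ h n := fun hn' m hm =>
      ((hP _).2.2.2 m hm).trans (div_le_div_of_nonneg_left (by linarith) (by positivity)
        (by gcongr))
    exact abs_riemannSum_sub_riemannSum_le hA hC hθ (hP n₁).1 (hP n₂).1 (hP n₁).2.1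
      (hP n₁).2.2.1 (hP n₂).2.1 (hP n₂).2.2.1 hs ht (hmesh hn₁) (hmesh hn₂)
  obtain ⟨L, hL⟩ := cauchySeq_tendsto_of_complete hcauchy
  refine ⟨L, fun δ N π hπ h0 hN hmesh => ?_, ?_⟩
  · refine le_of_tendsto_of_tendsto' (hL.const_sub _).abs ?_ fun n =>
      abs_riemannSum_sub_riemannSum_le hA hC hθ hπ (hP n).1 h0 hN (hP n).2.1 (hP n).2.2.1 hs ht
        hmesh (hP n).2.2.2
    simpa using ((hh.const_add (δ ^ (θ - 1))).const_mul (sewingConst C θ)).mul_const (t - s)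
  · refine le_of_tendsto' (hL.sub_const _).abs fun n => ?_
    obtain ⟨hPn, hP0, hPN, -⟩ := hP n
    simpa [hP0, hPN] using abs_riemannSum_sub_le hA hC hθ n.succ_pos hPn (hP0 ▸ hs) (hPN ▸ ht)

lemma exists_riemannSum_limit (hA : HasDefectBound A T C θ) (hC : 0 ≤ C) (hθ : 1 < θ)
    {s t : ℝ} (hs : 0 ≤ s) (hst : s ≤ t) (ht : t ≤ T) :
    ∃ L : ℝ, (∀ ε > (0 : ℝ), ∃ δ > (0 : ℝ), ∀ (N : ℕ) (π : ℕ → ℝ), π 0 = s → π N = t →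
        (∀ m < N, π m < π (m + 1)) → (∀ m < N, π (m + 1) - π m < δ) →
        |riemannSum A π N - L| < ε) ∧
      |L - A s t| ≤ sewingConst C θ * (t - s) ^ θ := by
  rcases hst.eq_or_lt with rfl | hlt
  · have hθ0 : θ ≠ 0 := by linarith
    have hAss : A s s = 0 := by simpa [Real.zero_rpow hθ0] using hA s s s hs le_rfl le_rfl ht
    refine ⟨0, fun ε hε => ⟨1, one_pos, fun N π h0 hN hπ _ => ?_⟩, by
      simp [hAss, Real.zero_rpow hθ0]⟩
    obtain rfl : N = 0 := by
      by_contra hN0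
      have := strictMonoOn_Iic_of_forall_lt_succ hπ (by simp) (le_refl N) (Nat.pos_of_ne_zero hN0)
      rw [h0, hN] at this
      exact lt_irrefl s this
    simpa [riemannSum] using hε
  · obtain ⟨L, hconv, hloc⟩ := exists_abs_riemannSum_sub_le hA hC hθ hs hlt ht
    refine ⟨L, fun ε hε => ?_, hloc⟩
    have hsmall : Tendsto (fun δ : ℝ => sewingConst C θ * δ ^ (θ - 1) * (t - s)) (𝓝[>] 0)
        (𝓝 0) := by
      simpa using (((tendsto_nhdsWithin_of_tendsto_nhds tendsto_id).rpow_const_nhds_zero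
        (by linarith)).const_mul (sewingConst C θ)).mul_const (t - s)
    obtain ⟨δ, hδε, hδ⟩ := ((hsmall.eventually (gt_mem_nhds hε)).and self_mem_nhdsWithin).exists
    exact ⟨δ, hδ, fun N π h0 hN hπ hmesh => (hconv δ N π (strictMonoOn_Iic_of_forall_lt_succ hπ)
      h0 hN fun m hm => (hmesh m hm).le).trans_lt hδε⟩

theorem exists_sewing (hA : HasDefectBound A T C θ) (hC : 0 ≤ C) (hθ : 1 < θ) :
    ∃ I : ℝ → ℝ → ℝ, ∀ s t, 0 ≤ s → s ≤ t → t ≤ T →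
      (∀ ε > (0 : ℝ), ∃ δ > (0 : ℝ), ∀ (N : ℕ) (π : ℕ → ℝ), π 0 = s → π N = t →
        (∀ m < N, π m < π (m + 1)) → (∀ m < N, π (m + 1) - π m < δ) →
        |riemannSum A π N - I s t| < ε) ∧
      |I s t - A s t| ≤ sewingConst C θ * (t - s) ^ θ := by
  choose! I hI using fun s t (hs : 0 ≤ s) (hst : s ≤ t) (ht : t ≤ T) =>
    exists_riemannSum_limit hA hC hθ hs hst ht
  exact ⟨I, hI⟩

end Sewing

lemma sum_Icc_sum_Ico_eq_sum_Icc_sum_Icc (f : ℕ → ℕ → ℕ → ℝ) (k : ℕ) :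
    ∑ i ∈ Icc 1 k, ∑ j ∈ Ico 1 i, f i j (i - j)
      = ∑ m ∈ Icc 1 k, ∑ j ∈ Icc (m + 1) k, f j (j - m) m := by
  rw [sum_sigma', sum_sigma']
  refine sum_nbij' (fun p => ⟨p.1 - p.2, p.1⟩) (fun p => ⟨p.2, p.2 - p.1⟩) ?_ ?_ ?_ ?_ ?_ <;>
    rintro ⟨a, b⟩ hab <;> simp only [mem_sigma, mem_Icc, mem_Ico] at hab ⊢
  any_goals omega
  all_goals rw [Nat.sub_sub_self (by omega)]

lemma sub_rpow_mul_sub_rpow_le {s u t p q : ℝ} (hsu : s ≤ u) (hut : u ≤ t) (hp : 0 ≤ p)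
    (hq : 0 ≤ q) : (u - s) ^ p * (t - u) ^ q ≤ (t - s) ^ (p + q) := by
  rw [Real.rpow_add_of_nonneg (by linarith) hp hq]
  exact mul_le_mul (by gcongr) (by gcongr) (by positivity)
    (Real.rpow_nonneg (by linarith) _)

def roughGerm (Y : ℕ → ℝ → ℝ) (𝕏 : ℕ → ℝ → ℝ → ℝ) (k : ℕ) (s t : ℝ) : ℝ :=
  ∑ i ∈ Icc 1 k, Y i s * 𝕏 i s t

def controlledRemainder (Y : ℕ → ℝ → ℝ) (𝕏 : ℕ → ℝ → ℝ → ℝ) (k i : ℕ) (s t : ℝ) : ℝ :=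
  Y i t - Y i s - ∑ j ∈ Icc (i + 1) k, Y j s * 𝕏 (j - i) s t

lemma eq_add_add_sum_Ico_of_chen {𝕏 : ℕ → ℝ → ℝ → ℝ} {i : ℕ} {s u t : ℝ} (hi : 1 ≤ i)
    (hChen : 𝕏 i s t = ∑ j ∈ range (i + 1), 𝕏 j s u * 𝕏 (i - j) u t)
    (h0su : 𝕏 0 s u = 1) (h0ut : 𝕏 0 u t = 1) :
    𝕏 i s t = 𝕏 i u t + 𝕏 i s u + ∑ j ∈ Ico 1 i, 𝕏 j s u * 𝕏 (i - j) u t := by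
  rw [hChen, sum_range_succ, sum_range_eq_add_Ico _ hi, Nat.sub_zero, Nat.sub_self, h0su, h0ut]
  ring

lemma roughGerm_defect_eq (Y : ℕ → ℝ → ℝ) (𝕏 : ℕ → ℝ → ℝ → ℝ) (k : ℕ) {s u t : ℝ}
    (hChen : ∀ i ∈ Icc 1 k,
      𝕏 i s t = 𝕏 i u t + 𝕏 i s u + ∑ j ∈ Ico 1 i, 𝕏 j s u * 𝕏 (i - j) u t) :
    roughGerm Y 𝕏 k s t - roughGerm Y 𝕏 k s u - roughGerm Y 𝕏 k u t
      = -∑ m ∈ Icc 1 k, controlledRemainder Y 𝕏 k m s u * 𝕏 m u t := by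
  have hswap := sum_Icc_sum_Ico_eq_sum_Icc_sum_Icc (fun i a b => Y i s * (𝕏 a s u * 𝕏 b u t)) k
  have hexpand : roughGerm Y 𝕏 k s t = ∑ i ∈ Icc 1 k, (Y i s * 𝕏 i u t + Y i s * 𝕏 i s u
      + ∑ j ∈ Ico 1 i, Y i s * (𝕏 j s u * 𝕏 (i - j) u t)) :=
    sum_congr rfl fun i hi => by rw [hChen i hi, mul_add, mul_add, mul_sum]
  rw [hexpand, sum_add_distrib, sum_add_distrib, hswap]
  simp only [roughGerm, controlledRemainder, sub_mul, sum_mul, sum_sub_distrib, mul_assoc]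
  ring

lemma roughGerm_hasDefectBound {T α : ℝ} (hα : 0 < α) {k : ℕ} {𝕏 : ℕ → ℝ → ℝ → ℝ} {C𝕏 : ℝ}
    (h0 : ∀ s t : ℝ, 0 ≤ s → s ≤ t → t ≤ T → 𝕏 0 s t = 1)
    (hChen : ∀ n, n ≤ k → ∀ s u t : ℝ, 0 ≤ s → s ≤ u → u ≤ t → t ≤ T →
      𝕏 n s t = ∑ j ∈ range (n + 1), 𝕏 j s u * 𝕏 (n - j) u t)
    (hHol : ∀ n, 1 ≤ n → n ≤ k → ∀ s t : ℝ, 0 ≤ s → s ≤ t → t ≤ T →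
      |𝕏 n s t| ≤ C𝕏 * (t - s) ^ ((n : ℝ) * α))
    {Y : ℕ → ℝ → ℝ} {CY : ℝ}
    (hY : ∀ i, 1 ≤ i → i ≤ k → ∀ s t : ℝ, 0 ≤ s → s ≤ t → t ≤ T →
      |controlledRemainder Y 𝕏 k i s t| ≤ CY * (t - s) ^ (((k + 1 - i : ℕ) : ℝ) * α)) :
    HasDefectBound (roughGerm Y 𝕏 k) T (k * (max C𝕏 0 * max CY 0)) (((k + 1 : ℕ) : ℝ) * α) := by
  intro s u t hs hsu hut ht
  have huT : u ≤ T := hut.trans ht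
  rw [roughGerm_defect_eq Y 𝕏 k fun i hi => eq_add_add_sum_Ico_of_chen (mem_Icc.1 hi).1
      (hChen i (mem_Icc.1 hi).2 s u t hs hsu hut ht) (h0 s u hs hsu huT)
      (h0 u t (hs.trans hsu) hut ht), abs_neg]
  have hterm : ∀ m ∈ Icc 1 k, |controlledRemainder Y 𝕏 k m s u * 𝕏 m u t|
      ≤ max C𝕏 0 * max CY 0 * (t - s) ^ (((k + 1 : ℕ) : ℝ) * α) := by
    intro m hm
    obtain ⟨hm1, hmk⟩ := mem_Icc.1 hm
    have hexp : ((k + 1 - m : ℕ) : ℝ) * α + (m : ℝ) * α = ((k + 1 : ℕ) : ℝ) * α := by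
      rw [Nat.cast_sub (by omega)]
      ring
    rw [abs_mul, ← hexp]
    calc |controlledRemainder Y 𝕏 k m s u| * |𝕏 m u t|
        ≤ (max CY 0 * (u - s) ^ (((k + 1 - m : ℕ) : ℝ) * α))
          * (max C𝕏 0 * (t - u) ^ ((m : ℝ) * α)) := by
          gcongr
          · exact (hY m hm1 hmk s u hs hsu huT).trans (by gcongr; exact le_max_left _ _)
          · exact (hHol m hm1 hmk u t (hs.trans hsu) hut ht).trans
              (by gcongr; exact le_max_left _ _)
      _ = max C𝕏 0 * max CY 0
          * ((u - s) ^ (((k + 1 - m : ℕ) : ℝ) * α) * (t - u) ^ ((m : ℝ) * α)) := by ring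
      _ ≤ _ := by
          gcongr
          exact sub_rpow_mul_sub_rpow_le hsu hut (by positivity) (by positivity)
  calc |∑ m ∈ Icc 1 k, controlledRemainder Y 𝕏 k m s u * 𝕏 m u t|
      ≤ ∑ _m ∈ Icc 1 k, max C𝕏 0 * max CY 0 * (t - s) ^ (((k + 1 : ℕ) : ℝ) * α) :=
        (abs_sum_le_sum_abs _ _).trans (sum_le_sum hterm)
    _ = _ := by
      rw [sum_const, Nat.card_Icc, nsmul_eq_mul, Nat.add_sub_cancel]
      ring

theorem rough_integral_exists_general
    (T α : ℝ) (hα : 0 < α)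
    (k : ℕ) (hk : k = ⌊1 / α⌋₊)
    (𝕏 : ℕ → ℝ → ℝ → ℝ) (C𝕏 : ℝ)
    (h0 : ∀ s t : ℝ, 0 ≤ s → s ≤ t → t ≤ T → 𝕏 0 s t = 1)
    (hChen : ∀ n, n ≤ k → ∀ s u t : ℝ, 0 ≤ s → s ≤ u → u ≤ t → t ≤ T →
      𝕏 n s t = ∑ j ∈ Finset.range (n + 1), 𝕏 j s u * 𝕏 (n - j) u t)
    (hHol : ∀ n, 1 ≤ n → n ≤ k → ∀ s t : ℝ, 0 ≤ s → s ≤ t → t ≤ T →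
      |𝕏 n s t| ≤ C𝕏 * (t - s) ^ ((n : ℝ) * α))
    (Y : ℕ → ℝ → ℝ) (CY : ℝ)
    (hY : ∀ i, 1 ≤ i → i ≤ k → ∀ s t : ℝ, 0 ≤ s → s ≤ t → t ≤ T →
      |Y i t - Y i s - ∑ j ∈ Finset.Icc (i + 1) k, Y j s * 𝕏 (j - i) s t|
        ≤ CY * (t - s) ^ (((k + 1 - i : ℕ) : ℝ) * α)) :
    ∃ I : ℝ → ℝ → ℝ,
      (∀ s t : ℝ, 0 ≤ s → s ≤ t → t ≤ T → ∀ ε > (0 : ℝ), ∃ δ > (0 : ℝ),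
        ∀ (N : ℕ) (π : ℕ → ℝ), π 0 = s → π N = t →
          (∀ m < N, π m < π (m + 1)) → (∀ m < N, π (m + 1) - π m < δ) →
          |(∑ m ∈ Finset.range N, ∑ i ∈ Finset.Icc 1 k,
              Y i (π m) * 𝕏 i (π m) (π (m + 1))) - I s t| < ε) ∧
      (∃ K : ℝ, ∀ s t : ℝ, 0 ≤ s → s ≤ t → t ≤ T →
        |I s t - ∑ i ∈ Finset.Icc 1 k, Y i s * 𝕏 i s t|
          ≤ K * (t - s) ^ (((k + 1 : ℕ) : ℝ) * α)) := by
  subst hk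
  have hθ : 1 < ((⌊1 / α⌋₊ + 1 : ℕ) : ℝ) * α := by
    have := Nat.lt_floor_add_one (1 / α)
    rw [div_lt_iff₀ hα] at this
    exact_mod_cast this
  obtain ⟨I, hI⟩ := exists_sewing (roughGerm_hasDefectBound hα h0 hChen hHol hY) (by positivity) hθ
  exact ⟨I, fun s t hs hst ht => (hI s t hs hst ht).1, _, fun s t hs hst ht => (hI s t hs hst ht).2⟩

/-- existence of the rough integral (one-dimensional case).  The
compensated Riemann sums along partitions of `[s,t]` converge as the mesh tends
to `0`, to a limit `I_{s,t}` which satisfies the local estimate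
`|I_{s,t} − ∑_{i=1}^k Y^{(i)}_s 𝕏^i_{s,t}| ≤ K (t−s)^{(k+1)α}`. -/
theorem rough_integral_exists
    (T α : ℝ) (hT : 0 < T) (hα : 0 < α) (hα1 : α ≤ 1)
    (k : ℕ) (hk : k = ⌊1 / α⌋₊)
    (𝕏 : ℕ → ℝ → ℝ → ℝ) (C𝕏 : ℝ)
    (h0 : ∀ s t : ℝ, 0 ≤ s → s ≤ t → t ≤ T → 𝕏 0 s t = 1)
    (hChen : ∀ n, n ≤ k → ∀ s u t : ℝ, 0 ≤ s → s ≤ u → u ≤ t → t ≤ T →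
      𝕏 n s t = ∑ j ∈ Finset.range (n + 1), 𝕏 j s u * 𝕏 (n - j) u t)
    (hHol : ∀ n, 1 ≤ n → n ≤ k → ∀ s t : ℝ, 0 ≤ s → s ≤ t → t ≤ T →
      |𝕏 n s t| ≤ C𝕏 * (t - s) ^ ((n : ℝ) * α))
    (Y : ℕ → ℝ → ℝ) (CY : ℝ)
    (hY : ∀ i, 1 ≤ i → i ≤ k → ∀ s t : ℝ, 0 ≤ s → s ≤ t → t ≤ T →
      |Y i t - Y i s - ∑ j ∈ Finset.Icc (i + 1) k, Y j s * 𝕏 (j - i) s t|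
        ≤ CY * (t - s) ^ (((k + 1 - i : ℕ) : ℝ) * α)) :
    ∃ I : ℝ → ℝ → ℝ,
      (∀ s t : ℝ, 0 ≤ s → s ≤ t → t ≤ T → ∀ ε > (0 : ℝ), ∃ δ > (0 : ℝ),
        ∀ (N : ℕ) (π : ℕ → ℝ), π 0 = s → π N = t →
          (∀ m < N, π m < π (m + 1)) → (∀ m < N, π (m + 1) - π m < δ) →
          |(∑ m ∈ Finset.range N, ∑ i ∈ Finset.Icc 1 k,
              Y i (π m) * 𝕏 i (π m) (π (m + 1))) - I s t| < ε) ∧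
      (∃ K : ℝ, ∀ s t : ℝ, 0 ≤ s → s ≤ t → t ≤ T →
        |I s t - ∑ i ∈ Finset.Icc 1 k, Y i s * 𝕏 i s t|
          ≤ K * (t - s) ^ (((k + 1 : ℕ) : ℝ) * α)) :=
  rough_integral_exists_general T α hα k hk 𝕏 C𝕏 h0 hChen hHol Y CY hY
end

section
/- Rough Itô formula for one-dimensional rough paths (Theorem 4.1), in compensated-Riemann-sum form: Let T > 0, α ∈ (0,1], k := ⌊1/α⌋. Let X : [0,T] → ℝ satisfy |X_t − X_s| ≤ C_X·(t−s)^α and let G^2, …, G^k : [0,T] → ℝ satisfy |G^m_t − G^m_s| ≤ C_G·(t−s)^{kα} for all 0 ≤ s ≤ t ≤ T and m = 2, …, k. Define 𝕏^n_{s,t} := P_n^{(k)}(X_t − X_s, G^2_t − G^2_s, …, G^k_t − G^k_s) for n = 0, …, k. Let F : [0,T] × ℝ → ℝ be such that the partial derivatives ∂_t^a ∂_x^i F exist and are continuous on [0,T] × ℝ for all a ∈ {0,1} and 0 ≤ i ≤ k+1. Then for all 0 ≤ s ≤ t ≤ T: for every ε > 0 there is δ > 0 such that for every partition s = t_0 <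 ⋯ < t_N = t of [s,t] with mesh < δ, | ∑_{m=0}^{N−1} [ ∂_tF(t_m, X_{t_m})·(t_{m+1} − t_m) + ∑_{i=1}^{k} ∂_x^iF(t_m, X_{t_m})·𝕏^i_{t_m, t_{m+1}} − ∑_{i=2}^{k} ∂_x^iF(t_m, X_{t_m})·(G^i_{t_{m+1}} − G^i_{t_m}) ] − ( F(t, X_t) − F(s, X_s) ) | < ε. (This expresses the identity F(t,X_t) − F(s,X_s) = ∫_s^t ∂_uF(u,X_u) du + ∫_s^t (∂_xF, …, ∂_x^kF)(u,X_u) d𝕏_u − ∑_{i=2}^{k} ∫_s^t ∂_x^iF(u,X_u) dG^i_u.) -/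
/-!
On each interval `[u, v]` of the partition, the error of the compensated Riemann sum splits into
three local errors: the time increment `F(v, X_v) - F(u, X_v) - ∂_tF(u, X_u) (v - u)`, which is
`o(v - u)` by the mean value theorem and the uniform continuity of `∂_tF` on a compact box; the
remainder of the Taylor expansion of `F(u, ·)` to order `k` at `X_u`, which is
`O(|X_v - X_u| ^ (k + 1)) = O((v - u) ^ ((k + 1) α))`; and the gap between `𝕏^i_{u,v}` and its two
leading monomials `(X_v - X_u) ^ i / i!` and `G^i_v - G^i_u`, which is also
`O((v - u) ^ ((k + 1) α))` because every other monomial of the Bell polynomial has weighted degree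
at least `k + 1`, counting `X_v - X_u` with weight `α` and each `G^m_v - G^m_u` with weight `kα`.
Since `(k + 1) α > 1`, all three errors are `o(v - u)` uniformly in `u`, so their sum over a fine
partition is small, while the increments of `F(·, X_·)` telescope to `F(t, X_t) - F(s, X_s)`.
-/

open Finset

open scoped Nat

section BellPolynomial

variable {k n : ℕ}

def bellExponents (k n : ℕ) : Finset (Fin k → ℕ) :=
  (Fintype.piFinset fun _ : Fin k => range (n + 1)).filter
    fun p => ∑ m : Fin k, ((m : ℕ) + 1) * p m = n

noncomputable def bellMonomial (a : Fin k → ℝ) (p : Fin k → ℕ) : ℝ :=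
  ∏ m : Fin k, a m ^ p m / ((p m)! : ℝ)

theorem bellP_eq_sum_bellMonomial (a : Fin k → ℝ) :
    bellP k n a = ∑ p ∈ bellExponents k n, bellMonomial a p := rfl

theorem mem_bellExponents {p : Fin k → ℕ} :
    p ∈ bellExponents k n ↔ ∑ m : Fin k, ((m : ℕ) + 1) * p m = n := by
  refine ⟨fun h => (mem_filter.1 h).2, fun h => mem_filter.2 ⟨?_, h⟩⟩
  refine Fintype.mem_piFinset.2 fun m => mem_range.2 ?_
  have := single_le_sum (f := fun m : Fin k => ((m : ℕ) + 1) * p m)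
    (fun _ _ => Nat.zero_le _) (mem_univ m)
  nlinarith

theorem sum_val_succ_mul_single (j : Fin k) (e : ℕ) :
    ∑ m : Fin k, ((m : ℕ) + 1) * (Pi.single j e : Fin k → ℕ) m = ((j : ℕ) + 1) * e :=
  (Fintype.sum_eq_single j fun m hm => by simp [hm]).trans (by simp)

theorem single_mem_bellExponents_iff {j : Fin k} {e : ℕ} :
    Pi.single j e ∈ bellExponents k n ↔ ((j : ℕ) + 1) * e = n := by
  rw [mem_bellExponents, sum_val_succ_mul_single]

theorem bellMonomial_single (a : Fin k → ℝ) (j : Fin k) (e : ℕ) :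
    bellMonomial a (Pi.single j e) = a j ^ e / (e ! : ℝ) := by
  rw [bellMonomial, Fintype.prod_eq_single j fun m hm => by simp [hm]]
  simp

theorem sum_le_of_mem_bellExponents {p : Fin k → ℕ} (hp : p ∈ bellExponents k n) :
    ∑ m, p m ≤ n :=
  (sum_le_sum fun m _ => Nat.le_mul_of_pos_left _ m.val.succ_pos).trans_eq
    (mem_bellExponents.1 hp)

theorem card_bellExponents_le : (bellExponents k n).card ≤ (n + 1) ^ k :=
  (card_filter_le _ _).trans_eq (by simp)

theorem abs_bellMonomial_le {a : Fin k → ℝ} {w : Fin k → ℕ} {C ρ : ℝ}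
    (ha : ∀ m, |a m| ≤ C * ρ ^ w m) (p : Fin k → ℕ) :
    |bellMonomial a p| ≤ C ^ (∑ m, p m) * ρ ^ (∑ m, w m * p m) := by
  calc |bellMonomial a p| = ∏ m, |a m| ^ p m / ((p m)! : ℝ) := by
        simp only [bellMonomial, abs_prod, abs_div, abs_pow, Nat.abs_cast]
    _ ≤ ∏ m, (C * ρ ^ w m) ^ p m := by
        gcongr with m
        exact (div_le_self (by positivity) (mod_cast (p m).factorial_pos)).trans
          (pow_le_pow_left₀ (abs_nonneg _) (ha m) _)
    _ = C ^ (∑ m, p m) * ρ ^ (∑ m, w m * p m) := by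
        simp only [mul_pow, ← pow_mul, prod_mul_distrib, prod_pow_eq_pow_sum]

theorem add_one_le_weighted_sum [NeZero k] {p : Fin k → ℕ} (hX : ∀ e, p ≠ Pi.single 0 e)
    (hG : ∀ j ≠ 0, p ≠ Pi.single j 1) :
    k + 1 ≤ ∑ m, (if m = 0 then 1 else k) * p m := by
  have hk : 1 ≤ k := Nat.one_le_iff_ne_zero.2 (NeZero.ne k)
  set q := ∑ m ∈ univ.erase 0, p m with hq
  have hsum : ∑ m, (if m = 0 then 1 else k) * p m = p 0 + k * q := by
    rw [← add_sum_erase _ _ (mem_univ 0), mul_sum, if_pos rfl, one_mul]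
    congr 1
    exact sum_congr rfl fun m hm => by rw [if_neg (ne_of_mem_erase hm)]
  have hq0 : q ≠ 0 := by
    intro h0
    refine hX (p 0) (funext fun m => ?_)
    rcases eq_or_ne m 0 with rfl | hm
    · simp
    · rw [Pi.single_eq_of_ne hm]
      exact sum_eq_zero_iff.1 h0 m (mem_erase.2 ⟨hm, mem_univ m⟩)
  have hq1 : q = 1 → p 0 ≠ 0 := by
    intro h1 hp0
    obtain ⟨j, hj, hpj⟩ := exists_ne_zero_of_sum_ne_zero (h1.trans_ne one_ne_zero)
    have hrest := add_sum_erase _ p hj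
    have hpj1 : p j = 1 := by omega
    refine hG j (ne_of_mem_erase hj) (funext fun m => ?_)
    rcases eq_or_ne m j with rfl | hmj
    · simp [hpj1]
    rw [Pi.single_eq_of_ne hmj]
    rcases eq_or_ne m 0 with rfl | hm0
    · exact hp0
    · exact sum_eq_zero_iff.1 (by omega) m (mem_erase.2 ⟨hmj, mem_erase.2 ⟨hm0, mem_univ m⟩⟩)
  rw [hsum]
  rcases Nat.lt_or_ge q 2 with h | h
  · have hq' : q = 1 := by omega
    have := Nat.pos_of_ne_zero (hq1 hq')
    rw [hq']; omega
  · nlinarith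

variable [NeZero k] {a : Fin k → ℝ} {C ρ : ℝ}

theorem abs_sum_bellMonomial_le {U : Finset (Fin k → ℕ)} (hU : U ⊆ bellExponents k n)
    (hnk : n ≤ k) (hU' : ∀ p ∈ U, (∀ e, p ≠ Pi.single 0 e) ∧ ∀ j ≠ 0, p ≠ Pi.single j 1)
    (hC : 1 ≤ C) (hρ0 : 0 ≤ ρ) (hρ1 : ρ ≤ 1) (ha0 : |a 0| ≤ C * ρ)
    (ha : ∀ m ≠ 0, |a m| ≤ C * ρ ^ k) :
    |∑ p ∈ U, bellMonomial a p| ≤ (k + 1) ^ k * C ^ k * ρ ^ (k + 1) := by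
  have hw : ∀ m, |a m| ≤ C * ρ ^ (if m = 0 then 1 else k) := fun m => by
    split_ifs with h
    · subst h; simpa using ha0
    · exact ha m h
  have hterm : ∀ p ∈ U, |bellMonomial a p| ≤ C ^ k * ρ ^ (k + 1) := fun p hp =>
    (abs_bellMonomial_le hw p).trans <| mul_le_mul
      (pow_le_pow_right₀ hC ((sum_le_of_mem_bellExponents (hU hp)).trans hnk))
      (pow_le_pow_of_le_one hρ0 hρ1 (add_one_le_weighted_sum (hU' p hp).1 (hU' p hp).2))
      (by positivity) (by positivity)
  have hcard : (U.card : ℝ) ≤ (k + 1) ^ k := by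
    exact_mod_cast (card_le_card hU).trans <| card_bellExponents_le.trans <|
      Nat.pow_le_pow_left (by omega) k
  calc |∑ p ∈ U, bellMonomial a p| ≤ ∑ p ∈ U, |bellMonomial a p| := abs_sum_le_sum_abs _ _
    _ ≤ U.card * (C ^ k * ρ ^ (k + 1)) := by
        simpa using sum_le_card_nsmul _ _ _ hterm
    _ ≤ (k + 1) ^ k * C ^ k * ρ ^ (k + 1) := by
        rw [← mul_assoc]; gcongr

theorem abs_bellP_sub_le {i : ℕ} (hi : 1 ≤ i) (hik : i ≤ k) (hC : 1 ≤ C) (hρ0 : 0 ≤ ρ)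
    (hρ1 : ρ ≤ 1) (ha0 : |a 0| ≤ C * ρ) (ha : ∀ m ≠ 0, |a m| ≤ C * ρ ^ k) :
    |bellP k i a - a 0 ^ i / (i ! : ℝ) - (if 2 ≤ i then a ⟨i - 1, by omega⟩ else 0)|
      ≤ (k + 1) ^ k * C ^ k * ρ ^ (k + 1) := by
  have hpX : Pi.single 0 i ∈ bellExponents k i := single_mem_bellExponents_iff.2 (by simp)
  have hsingle0 : ∀ e, Pi.single 0 e ∈ bellExponents k i → e = i := fun e he => by
    simpa using single_mem_bellExponents_iff.1 he
  have hsingle1 : ∀ j : Fin k, Pi.single j 1 ∈ bellExponents k i → (j : ℕ) + 1 = i :=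
    fun j hj => by simpa using single_mem_bellExponents_iff.1 hj
  rw [bellP_eq_sum_bellMonomial, ← add_sum_erase _ _ hpX, bellMonomial_single]
  split_ifs with h2
  · set pG : Fin k → ℕ := Pi.single ⟨i - 1, by omega⟩ 1
    have hpG : pG ∈ (bellExponents k i).erase (Pi.single 0 i) := by
      refine mem_erase.2 ⟨fun h => ?_, single_mem_bellExponents_iff.2 (by rw [mul_one]; exact Nat.sub_add_cancel hi)⟩
      have := congrFun h 0
      simp only [pG, Pi.single_apply, Fin.ext_iff, Fin.val_zero, if_pos] at this
      split_ifs at this <;> omega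
    rw [← add_sum_erase _ _ hpG, bellMonomial_single, pow_one, Nat.factorial_one, Nat.cast_one,
      div_one, add_sub_cancel_left, add_sub_cancel_left]
    refine abs_sum_bellMonomial_le ((erase_subset _ _).trans (erase_subset _ _)) hik
      (fun p hp => ?_) hC hρ0 hρ1 ha0 ha
    obtain ⟨hpG', hpX', hpS⟩ := mem_erase.1 hp |>.imp_right mem_erase.1
    refine ⟨?_, ?_⟩
    · rintro e rfl
      exact hpX' (by rw [hsingle0 e hpS])
    · rintro j - rfl
      exact hpG' (by simp only [pG, ← hsingle1 j hpS]; rfl)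
  · rw [add_sub_cancel_left, sub_zero]
    refine abs_sum_bellMonomial_le (erase_subset _ _) hik (fun p hp => ?_) hC hρ0 hρ1 ha0 ha
    obtain ⟨hpX', hpS⟩ := mem_erase.1 hp
    refine ⟨?_, ?_⟩
    · rintro e rfl
      exact hpX' (by rw [hsingle0 e hpS])
    · rintro j hj rfl
      have := hsingle1 j hpS
      exact hj (Fin.ext (by rw [Fin.val_zero]; omega))

end BellPolynomial

section Taylor

variable {g : ℕ → ℝ → ℝ} {n : ℕ}

theorem hasDerivAt_taylorSum (hg : ∀ i ≤ n, ∀ x, HasDerivAt (g i) (g (i + 1) x) x) (b x : ℝ) :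
    HasDerivAt (fun y => ∑ i ∈ range (n + 1), g i y * (b - y) ^ i / (i ! : ℝ))
      (g (n + 1) x * (b - x) ^ n / (n ! : ℝ)) x := by
  induction n with
  | zero => simpa using hg 0 le_rfl x
  | succ n ih =>
    have hterm := (((hg (n + 1) le_rfl x).mul
      (((hasDerivAt_id x).const_sub b).pow (n + 1))).div_const ((n + 1)! : ℝ))
    simp only [sum_range_succ _ (n + 1)]
    refine ((ih fun i hi => hg i (by omega)).add hterm).congr_deriv ?_
    rw [Nat.factorial_succ, Nat.cast_mul]
    field_simp
    simp only [id, Pi.pow_apply, Nat.add_sub_cancel]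
    push_cast
    ring

theorem abs_sub_taylorSum_le (hg : ∀ i ≤ n, ∀ x, HasDerivAt (g i) (g (i + 1) x) x)
    {a b M : ℝ} (hM : ∀ x ∈ Set.uIcc a b, |g (n + 1) x| ≤ M) :
    |g 0 b - ∑ i ∈ range (n + 1), g i a * (b - a) ^ i / (i ! : ℝ)|
      ≤ M * |b - a| ^ (n + 1) / (n ! : ℝ) := by
  have hb : ∑ i ∈ range (n + 1), g i b * (b - b) ^ i / (i ! : ℝ) = g 0 b := by
    rw [sum_eq_single 0 (fun i _ hi => by simp [hi]) (by simp)]; simp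
  have hderiv : ∀ x ∈ Set.uIcc a b,
      |g (n + 1) x * (b - x) ^ n / (n ! : ℝ)| ≤ M * |b - a| ^ n / (n ! : ℝ) := by
    intro x hx
    rw [abs_div, abs_mul, abs_pow, Nat.abs_cast]
    have := Set.abs_sub_right_of_mem_uIcc hx
    gcongr
    · exact (abs_nonneg _).trans (hM x hx)
    · exact hM x hx
  have := (convex_uIcc a b).norm_image_sub_le_of_norm_hasDerivWithin_le
    (fun x _ => (hasDerivAt_taylorSum hg b x).hasDerivWithinAt) hderiv
    Set.left_mem_uIcc Set.right_mem_uIcc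
  rw [hb] at this
  calc _ ≤ M * |b - a| ^ n / (n ! : ℝ) * |b - a| := this
    _ = M * |b - a| ^ (n + 1) / (n ! : ℝ) := by ring

end Taylor

theorem abs_sum_range_sub_sub_le {a Φ w : ℕ → ℝ} {c : ℝ} {N : ℕ}
    (h : ∀ m < N, |a m - (Φ (m + 1) - Φ m)| ≤ c * (w (m + 1) - w m)) :
    |∑ m ∈ range N, a m - (Φ N - Φ 0)| ≤ c * (w N - w 0) := by
  rw [← sum_range_sub Φ, ← sum_sub_distrib, ← sum_range_sub w, mul_sum]
  exact (abs_sum_le_sum_abs _ _).trans (sum_le_sum fun m hm => h m (mem_range.1 hm))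

theorem exists_pos_forall_mul_rpow_lt (K : ℝ) {γ c : ℝ} (hγ : 0 < γ) (hc : 0 < c) :
    ∃ δ > 0, ∀ x, 0 ≤ x → x < δ → K * x ^ γ < c := by
  have hcont : ContinuousAt (fun x : ℝ => K * x ^ γ) 0 :=
    (Real.continuousAt_rpow_const 0 γ (Or.inr hγ.le)).const_mul K
  obtain ⟨δ, hδ, h⟩ := Metric.continuousAt_iff.1 hcont c hc
  refine ⟨δ, hδ, fun x hx0 hx => ?_⟩
  have := h (x := x) (by rwa [Real.dist_eq, sub_zero, abs_of_nonneg hx0])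
  rw [Real.dist_eq, Real.zero_rpow hγ.ne', mul_zero, sub_zero] at this
  exact (le_abs_self _).trans_lt this

def IsNegligible (T : ℝ) (E : ℝ → ℝ → ℝ) : Prop :=
  ∀ c > 0, ∃ δ > 0, ∀ u v, 0 ≤ u → u ≤ v → v ≤ T → v - u < δ → |E u v| ≤ c * (v - u)

namespace IsNegligible

variable {T : ℝ} {E E' : ℝ → ℝ → ℝ}

theorem zero : IsNegligible T fun _ _ => 0 :=
  fun _ hc => ⟨1, one_pos, fun _ _ _ huv _ _ => by
    rw [abs_zero]; exact mul_nonneg hc.le (sub_nonneg.2 huv)⟩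

theorem add (h : IsNegligible T E) (h' : IsNegligible T E') :
    IsNegligible T fun u v => E u v + E' u v := by
  intro c hc
  obtain ⟨δ, hδ, hE⟩ := h (c / 2) (half_pos hc)
  obtain ⟨δ', hδ', hE'⟩ := h' (c / 2) (half_pos hc)
  refine ⟨min δ δ', lt_min hδ hδ', fun u v hu huv hv hlt => ?_⟩
  have := hE u v hu huv hv (hlt.trans_le (min_le_left _ _))
  have := hE' u v hu huv hv (hlt.trans_le (min_le_right _ _))
  calc |E u v + E' u v| ≤ |E u v| + |E' u v| := abs_add_le _ _
    _ ≤ c * (v - u) := by linarith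

theorem neg (h : IsNegligible T E) : IsNegligible T fun u v => -E u v := by
  simpa only [IsNegligible, abs_neg] using h

theorem sub (h : IsNegligible T E) (h' : IsNegligible T E') :
    IsNegligible T fun u v => E u v - E' u v := by
  simpa only [sub_eq_add_neg] using h.add h'.neg

theorem sum {ι : Type*} (s : Finset ι) {E : ι → ℝ → ℝ → ℝ}
    (h : ∀ i ∈ s, IsNegligible T (E i)) : IsNegligible T fun u v => ∑ i ∈ s, E i u v := by
  classical
  induction s using Finset.induction_on with
  | empty => simpa using zero
  | insert i s hi ih =>
    simpa only [sum_insert hi] using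
      (h i (mem_insert_self i s)).add (ih fun j hj => h j (mem_insert_of_mem hj))

theorem of_abs_le_rpow {γ : ℝ} (hγ : 1 < γ) (K : ℝ)
    (hE : ∀ u v, 0 ≤ u → u ≤ v → v ≤ T → v - u ≤ 1 → |E u v| ≤ K * (v - u) ^ γ) :
    IsNegligible T E := by
  intro c hc
  obtain ⟨δ, hδ, hsmall⟩ := exists_pos_forall_mul_rpow_lt K (sub_pos.2 hγ) hc
  refine ⟨min δ 1, lt_min hδ one_pos, fun u v hu huv hv hlt => ?_⟩
  have hD : 0 ≤ v - u := sub_nonneg.2 huv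
  calc |E u v| ≤ K * (v - u) ^ γ := hE u v hu huv hv (hlt.le.trans (min_le_right _ _))
    _ = K * (v - u) ^ (γ - 1) * (v - u) := by
        rw [mul_assoc, ← Real.rpow_add_one' hD (by linarith), sub_add_cancel]
    _ ≤ c * (v - u) := by
        gcongr
        exact (hsmall _ hD (hlt.trans_le (min_le_left _ _))).le

end IsNegligible

theorem exists_bound_on_Icc_prod {T : ℝ} {f : ℝ → ℝ → ℝ}
    (hf : ContinuousOn (fun p : ℝ × ℝ => f p.1 p.2) (Set.Icc 0 T ×ˢ Set.univ)) (R : ℝ) :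
    ∃ M, 0 ≤ M ∧ ∀ u ∈ Set.Icc 0 T, ∀ x ∈ Set.Icc (-R) R, |f u x| ≤ M := by
  obtain ⟨M, hM⟩ := (isCompact_Icc.prod isCompact_Icc).exists_bound_of_continuousOn
    (hf.mono (Set.prod_mono subset_rfl (Set.subset_univ (Set.Icc (-R) R))))
  exact ⟨max M 0, le_max_right _ _, fun u hu x hx => (hM (u, x) ⟨hu, hx⟩).trans (le_max_left _ _)⟩

section Holder

variable {T α CX : ℝ} {X : ℝ → ℝ}

theorem exists_abs_le_of_holder (hα : 0 ≤ α)
    (hX : ∀ s t, 0 ≤ s → s ≤ t → t ≤ T → |X t - X s| ≤ CX * (t - s) ^ α) :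
    ∃ R, ∀ u ∈ Set.Icc 0 T, |X u| ≤ R := by
  refine ⟨|X 0| + |CX| * T ^ α, fun u ⟨hu, huT⟩ => ?_⟩
  have h := hX 0 u le_rfl hu huT
  rw [sub_zero] at h
  calc |X u| ≤ |X 0| + |X u - X 0| := by
        simpa using abs_add_le (X 0) (X u - X 0)
    _ ≤ |X 0| + |CX| * T ^ α := by
        gcongr
        exact h.trans (mul_le_mul (le_abs_self _) (Real.rpow_le_rpow hu huT hα)
          (by positivity) (abs_nonneg _))

variable (hα : 0 < α) (hX : ∀ s t, 0 ≤ s → s ≤ t → t ≤ T → |X t - X s| ≤ CX * (t - s) ^ α)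
include hα hX

theorem isNegligible_time {Φ Φt : ℝ → ℝ → ℝ}
    (hΦ : ∀ t ∈ Set.Icc 0 T, ∀ x, HasDerivWithinAt (fun u => Φ u x) (Φt t x) (Set.Icc 0 T) t)
    (hΦt : ContinuousOn (fun p : ℝ × ℝ => Φt p.1 p.2) (Set.Icc 0 T ×ˢ Set.univ)) :
    IsNegligible T fun u v => Φ v (X v) - Φ u (X v) - Φt u (X u) * (v - u) := by
  intro c hc
  obtain ⟨R, hR⟩ := exists_abs_le_of_holder hα.le hX
  have hK : ∀ u ∈ Set.Icc 0 T, ∀ v ∈ Set.Icc 0 T,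
      (u, X v) ∈ Set.Icc 0 T ×ˢ Set.Icc (-R) R := fun u hu v hv => ⟨hu, abs_le.1 (hR v hv)⟩
  obtain ⟨δ₁, hδ₁, hUC⟩ := Metric.uniformContinuousOn_iff.1
    ((isCompact_Icc.prod isCompact_Icc).uniformContinuousOn_of_continuous
      (hΦt.mono (Set.prod_mono subset_rfl (Set.subset_univ (Set.Icc (-R) R))))) c hc
  obtain ⟨δ₂, hδ₂, hXsmall⟩ := exists_pos_forall_mul_rpow_lt CX hα hδ₁
  refine ⟨min δ₁ δ₂, lt_min hδ₁ hδ₂, fun u v hu huv hv hlt => ?_⟩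
  rcases huv.eq_or_lt with rfl | huv
  · simp
  have hsub : Set.Icc u v ⊆ Set.Icc 0 T := Set.Icc_subset_Icc hu hv
  obtain ⟨ξ, hξ, hslope⟩ := exists_hasDerivAt_eq_slope (fun τ => Φ τ (X v)) (fun τ => Φt τ (X v))
    huv (fun τ hτ => (hΦ τ (hsub hτ) (X v)).continuousWithinAt.mono hsub)
    (fun τ hτ => (hΦ τ (hsub (Set.Ioo_subset_Icc_self hτ)) (X v)).hasDerivAt
      (Icc_mem_nhds (hu.trans_lt hτ.1) (hτ.2.trans_le hv)))
  have hmvt : Φ v (X v) - Φ u (X v) = Φt ξ (X v) * (v - u) := by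
    rw [hslope, div_mul_cancel₀ _ (sub_pos.2 huv).ne']
  have hξT := hsub (Set.Ioo_subset_Icc_self hξ)
  have huT : u ∈ Set.Icc 0 T := hsub (Set.left_mem_Icc.2 huv.le)
  have hvT : v ∈ Set.Icc 0 T := hsub (Set.right_mem_Icc.2 huv.le)
  dsimp only
  rw [hmvt, ← sub_mul, abs_mul, abs_of_pos (sub_pos.2 huv)]
  refine mul_le_mul_of_nonneg_right (le_of_lt ?_) (sub_pos.2 huv).le
  rw [← Real.dist_eq]
  refine hUC _ (hK ξ hξT v hvT) _ (hK u huT u huT) (max_lt ?_ ?_)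
  · rw [Real.dist_eq, abs_of_pos (sub_pos.2 hξ.1)]
    linarith [hlt.trans_le (min_le_left δ₁ δ₂), hξ.2]
  · rw [Real.dist_eq]
    exact (hX u v hu huv.le hv).trans_lt
      (hXsmall _ (sub_pos.2 huv).le (hlt.trans_le (min_le_right _ _)))

theorem isNegligible_taylor {k : ℕ} (hkα : 1 < (k + 1) * α) {f : ℕ → ℝ → ℝ → ℝ}
    (hf : ∀ i ≤ k, ∀ t ∈ Set.Icc 0 T, ∀ x, HasDerivAt (f i t) (f (i + 1) t x) x)
    (hfc : ContinuousOn (fun p : ℝ × ℝ => f (k + 1) p.1 p.2) (Set.Icc 0 T ×ˢ Set.univ)) :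
    IsNegligible T fun u v =>
      f 0 u (X v) - f 0 u (X u) - ∑ i ∈ Icc 1 k, f i u (X u) * (X v - X u) ^ i / (i ! : ℝ) := by
  obtain ⟨R, hR⟩ := exists_abs_le_of_holder hα.le hX
  obtain ⟨M, hM0, hM⟩ := exists_bound_on_Icc_prod hfc R
  refine IsNegligible.of_abs_le_rpow hkα (M * CX ^ (k + 1) / (k ! : ℝ))
    fun u v hu huv hv _ => ?_
  have huT : u ∈ Set.Icc 0 T := ⟨hu, huv.trans hv⟩
  have htaylor := abs_sub_taylorSum_le (g := fun i => f i u) (fun i hi x => hf i hi u huT x)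
    (a := X u) (b := X v) fun x hx => hM u huT x <|
      Set.uIcc_subset_Icc (abs_le.1 (hR u huT)) (abs_le.1 (hR v ⟨hu.trans huv, hv⟩)) hx
  rw [sum_range_eq_add_Ico _ (by omega : 0 < k + 1), Ico_add_one_right_eq_Icc] at htaylor
  simp only [pow_zero, Nat.factorial_zero, Nat.cast_one, mul_one, div_one, ← sub_sub] at htaylor
  have hXuv := hX u v hu huv hv
  calc _ ≤ M * |X v - X u| ^ (k + 1) / (k ! : ℝ) := htaylor
    _ ≤ M * (CX * (v - u) ^ α) ^ (k + 1) / (k ! : ℝ) := by gcongr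
    _ = M * CX ^ (k + 1) / (k ! : ℝ) * (v - u) ^ ((k + 1) * α) := by
        rw [mul_pow, ← Real.rpow_mul_natCast (sub_nonneg.2 huv), mul_comm α]
        push_cast
        ring

section RoughIncrement

variable {k : ℕ} [NeZero k] {CG : ℝ} {G : ℕ → ℝ → ℝ} {𝕏 : ℕ → ℝ → ℝ → ℝ}
  (hG : ∀ m, 2 ≤ m → m ≤ k → ∀ s t, 0 ≤ s → s ≤ t → t ≤ T →
    |G m t - G m s| ≤ CG * (t - s) ^ ((k : ℝ) * α))
  (h𝕏 : ∀ n s t, 𝕏 n s t = bellP k n fun i : Fin k =>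
    if (i : ℕ) = 0 then X t - X s else G ((i : ℕ) + 1) t - G ((i : ℕ) + 1) s)
include hG h𝕏

theorem abs_bellP_increment_sub_le {i : ℕ} (hi : i ∈ Icc 1 k) {u v : ℝ} (hu : 0 ≤ u) (huv : u ≤ v)
    (hv : v ≤ T) (h1 : v - u ≤ 1) :
    |𝕏 i u v - (X v - X u) ^ i / (i ! : ℝ) - (if 2 ≤ i then G i v - G i u else 0)|
      ≤ (k + 1) ^ k * max 1 (max CX CG) ^ k * (v - u) ^ ((k + 1) * α) := by
  obtain ⟨hi1, hik⟩ := mem_Icc.1 hi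
  have hρ0 : 0 ≤ (v - u) ^ α := by positivity
  have hρk : ∀ n : ℕ, ((v - u) ^ α) ^ n = (v - u) ^ (n * α) := fun n => by
    rw [← Real.rpow_mul_natCast (sub_nonneg.2 huv), mul_comm]
  have hbell := abs_bellP_sub_le (C := max 1 (max CX CG)) (a := fun i : Fin k =>
      if (i : ℕ) = 0 then X v - X u else G ((i : ℕ) + 1) v - G ((i : ℕ) + 1) u)
    hi1 hik (le_max_left _ _) hρ0 (Real.rpow_le_one (sub_nonneg.2 huv) h1 hα.le) ?_ ?_
  · rw [← h𝕏, hρk] at hbell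
    convert hbell using 4
    · simp
    · simp only [show i - 1 ≠ 0 by omega, if_false, Nat.sub_add_cancel hi1]
    · push_cast; ring
  · simp only [Fin.val_zero, if_true]
    exact (hX u v hu huv hv).trans (by gcongr; exact le_max_of_le_right (le_max_left _ _))
  · intro m hm
    have hm0 : (m : ℕ) ≠ 0 := Fin.val_ne_zero_iff.2 hm
    simp only [hm0, if_false, hρk]
    exact (hG _ (by omega) (by omega) u v hu huv hv).trans
      (by gcongr; exact le_max_of_le_right (le_max_right _ _))

theorem isNegligible_bell (hkα : 1 < (k + 1) * α) {f : ℕ → ℝ → ℝ → ℝ}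
    (hfc : ∀ i ∈ Icc 1 k, ContinuousOn (fun p : ℝ × ℝ => f i p.1 p.2) (Set.Icc 0 T ×ˢ Set.univ)) :
    IsNegligible T fun u v => ∑ i ∈ Icc 1 k, f i u (X u) * 𝕏 i u v
      - ∑ i ∈ Icc 2 k, f i u (X u) * (G i v - G i u)
      - ∑ i ∈ Icc 1 k, f i u (X u) * (X v - X u) ^ i / (i ! : ℝ) := by
  obtain ⟨R, hR⟩ := exists_abs_le_of_holder hα.le hX
  have hterm : ∀ i ∈ Icc 1 k, IsNegligible T fun u v => f i u (X u) *
      (𝕏 i u v - (X v - X u) ^ i / (i ! : ℝ) - if 2 ≤ i then G i v - G i u else 0) := by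
    intro i hi
    obtain ⟨M, hM0, hM⟩ := exists_bound_on_Icc_prod (hfc i hi) R
    refine .of_abs_le_rpow hkα (M * ((k + 1) ^ k * max 1 (max CX CG) ^ k))
      fun u v hu huv hv h1 => ?_
    have huT : u ∈ Set.Icc 0 T := ⟨hu, huv.trans hv⟩
    rw [abs_mul, mul_assoc]
    exact mul_le_mul (hM u huT (X u) (abs_le.1 (hR u huT)))
      (abs_bellP_increment_sub_le hα hX hG h𝕏 hi hu huv hv h1) (abs_nonneg _) hM0
  convert IsNegligible.sum _ hterm using 3 with u v
  have hIcc : (Icc 1 k).filter (2 ≤ ·) = Icc 2 k := by ext; simp only [mem_filter, mem_Icc]; omega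
  simp only [mul_sub, sum_sub_distrib, mul_ite, mul_zero, ← sum_filter, hIcc, mul_div_assoc]
  ring

end RoughIncrement

end Holder

theorem rough_ito_formula_general
    (T α : ℝ) (hα : 0 < α) (hα1 : α ≤ 1)
    (k : ℕ) (hk : k = ⌊1 / α⌋₊)
    (X : ℝ → ℝ) (G : ℕ → ℝ → ℝ) (CX CG : ℝ)
    (hX : ∀ s t : ℝ, 0 ≤ s → s ≤ t → t ≤ T → |X t - X s| ≤ CX * (t - s) ^ α)
    (hG : ∀ m, 2 ≤ m → m ≤ k → ∀ s t : ℝ, 0 ≤ s → s ≤ t → t ≤ T →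
      |G m t - G m s| ≤ CG * (t - s) ^ ((k : ℝ) * α))
    (𝕏 : ℕ → ℝ → ℝ → ℝ)
    (h𝕏 : ∀ n, ∀ s t : ℝ, 𝕏 n s t = bellP k n (fun i : Fin k =>
      if (i : ℕ) = 0 then X t - X s else G ((i : ℕ) + 1) t - G ((i : ℕ) + 1) s))
    (F : ℝ → ℝ → ℝ) (fd ft : ℕ → ℝ → ℝ → ℝ)
    (hfd0 : fd 0 = F)
    (hx : ∀ i, i < k + 1 → ∀ t ∈ Set.Icc (0 : ℝ) T, ∀ x : ℝ,
      HasDerivAt (fun y => fd i t y) (fd (i + 1) t x) x)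
    (ht : ∀ i, i ≤ k + 1 → ∀ t ∈ Set.Icc (0 : ℝ) T, ∀ x : ℝ,
      HasDerivWithinAt (fun u => fd i u x) (ft i t x) (Set.Icc 0 T) t)
    (hcx : ∀ i, i ≤ k + 1 → ContinuousOn (fun p : ℝ × ℝ => fd i p.1 p.2)
      (Set.Icc (0 : ℝ) T ×ˢ Set.univ))
    (hct : ∀ i, i ≤ k + 1 → ContinuousOn (fun p : ℝ × ℝ => ft i p.1 p.2)
      (Set.Icc (0 : ℝ) T ×ˢ Set.univ)) :
    ∀ s t : ℝ, 0 ≤ s → s ≤ t → t ≤ T → ∀ ε > (0 : ℝ), ∃ δ > (0 : ℝ),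
      ∀ (N : ℕ) (π : ℕ → ℝ), π 0 = s → π N = t →
        (∀ m < N, π m < π (m + 1)) → (∀ m < N, π (m + 1) - π m < δ) →
        |(∑ m ∈ Finset.range N,
            (ft 0 (π m) (X (π m)) * (π (m + 1) - π m)
              + ∑ i ∈ Finset.Icc 1 k, fd i (π m) (X (π m)) * 𝕏 i (π m) (π (m + 1))
              - ∑ i ∈ Finset.Icc 2 k, fd i (π m) (X (π m)) * (G i (π (m + 1)) - G i (π m))))
          - (F t (X t) - F s (X s))| < ε := by
  intro s t hs hst htT ε hε
  subst hfd0
  have : NeZero k := ⟨by rw [hk]; exact (Nat.floor_pos.2 (one_le_one_div hα hα1)).ne'⟩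
  have hkα : 1 < (k + 1) * α := by
    rw [← div_lt_iff₀ hα, hk]
    exact Nat.lt_floor_add_one _
  have hlocal : IsNegligible T fun u v => ft 0 u (X u) * (v - u)
      + ∑ i ∈ Icc 1 k, fd i u (X u) * 𝕏 i u v - ∑ i ∈ Icc 2 k, fd i u (X u) * (G i v - G i u)
      - (fd 0 v (X v) - fd 0 u (X u)) := by
    convert ((isNegligible_bell hα hX hG h𝕏 hkα
      fun i hi => hcx i ((mem_Icc.1 hi).2.trans k.le_succ)).sub
      (isNegligible_time hα hX (ht 0 (by omega)) (hct 0 (by omega)))).sub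
      (isNegligible_taylor hα hX hkα (fun i hi => hx i (by omega)) (hcx (k + 1) le_rfl))
      using 3
    ring
  obtain ⟨δ, hδ, hsmall⟩ := hlocal (ε / (t - s + 1)) (by positivity)
  refine ⟨δ, hδ, fun N π hπ0 hπN hπ hmesh => ?_⟩
  have hmono := (strictMonoOn_Iic_of_lt_succ (ψ := π) (n := N) hπ).monotoneOn
  subst hπ0 hπN
  have hπ0_le : ∀ m ≤ N, π 0 ≤ π m := fun m hm =>
    hmono (Set.mem_Iic.2 (Nat.zero_le N)) (Set.mem_Iic.2 hm) (Nat.zero_le m)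
  have hle_πN : ∀ m ≤ N, π m ≤ π N := fun m hm => hmono (Set.mem_Iic.2 hm) (Set.mem_Iic.2 le_rfl) hm
  calc _ ≤ ε / (π N - π 0 + 1) * (π N - π 0) :=
        abs_sum_range_sub_sub_le (Φ := fun m => fd 0 (π m) (X (π m))) fun m hm =>
          hsmall _ _ (hs.trans (hπ0_le m hm.le)) (hπ m hm).le ((hle_πN _ hm).trans htT)
            (hmesh m hm)
    _ < ε := by
        rw [div_mul_eq_mul_div, div_lt_iff₀ (by linarith)]
        nlinarith

/-- rough Itô formula for one-dimensional rough paths, in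
compensated-Riemann-sum form.  Here `fd i t x` represents `∂_x^i F(t,x)` and
`ft i t x` represents `∂_t ∂_x^i F(t,x)`, for `0 ≤ i ≤ k+1`; these partial
derivatives are assumed to exist and be continuous on `[0,T] × ℝ`.  The
compensated Riemann sums of
`∂_t F du + (∂_x F,…,∂_x^k F) d𝕏 − ∑_{i=2}^k ∂_x^i F dG^i`
converge to `F(t,X_t) − F(s,X_s)` as the mesh of the partition tends to `0`. -/
theorem rough_ito_formula
    (T α : ℝ) (hT : 0 < T) (hα : 0 < α) (hα1 : α ≤ 1)
    (k : ℕ) (hk : k = ⌊1 / α⌋₊)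
    (X : ℝ → ℝ) (G : ℕ → ℝ → ℝ) (CX CG : ℝ)
    (hX : ∀ s t : ℝ, 0 ≤ s → s ≤ t → t ≤ T → |X t - X s| ≤ CX * (t - s) ^ α)
    (hG : ∀ m, 2 ≤ m → m ≤ k → ∀ s t : ℝ, 0 ≤ s → s ≤ t → t ≤ T →
      |G m t - G m s| ≤ CG * (t - s) ^ ((k : ℝ) * α))
    (𝕏 : ℕ → ℝ → ℝ → ℝ)
    (h𝕏 : ∀ n, ∀ s t : ℝ, 𝕏 n s t = bellP k n (fun i : Fin k =>
      if (i : ℕ) = 0 then X t - X s else G ((i : ℕ) + 1) t - G ((i : ℕ) + 1) s))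
    (F : ℝ → ℝ → ℝ) (fd ft : ℕ → ℝ → ℝ → ℝ)
    (hfd0 : fd 0 = F)
    (hx : ∀ i, i < k + 1 → ∀ t ∈ Set.Icc (0 : ℝ) T, ∀ x : ℝ,
      HasDerivAt (fun y => fd i t y) (fd (i + 1) t x) x)
    (ht : ∀ i, i ≤ k + 1 → ∀ t ∈ Set.Icc (0 : ℝ) T, ∀ x : ℝ,
      HasDerivWithinAt (fun u => fd i u x) (ft i t x) (Set.Icc 0 T) t)
    (hcx : ∀ i, i ≤ k + 1 → ContinuousOn (fun p : ℝ × ℝ => fd i p.1 p.2)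
      (Set.Icc (0 : ℝ) T ×ˢ Set.univ))
    (hct : ∀ i, i ≤ k + 1 → ContinuousOn (fun p : ℝ × ℝ => ft i p.1 p.2)
      (Set.Icc (0 : ℝ) T ×ˢ Set.univ)) :
    ∀ s t : ℝ, 0 ≤ s → s ≤ t → t ≤ T → ∀ ε > (0 : ℝ), ∃ δ > (0 : ℝ),
      ∀ (N : ℕ) (π : ℕ → ℝ), π 0 = s → π N = t →
        (∀ m < N, π m < π (m + 1)) → (∀ m < N, π (m + 1) - π m < δ) →
        |(∑ m ∈ Finset.range N,
            (ft 0 (π m) (X (π m)) * (π (m + 1) - π m)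
              + ∑ i ∈ Finset.Icc 1 k, fd i (π m) (X (π m)) * 𝕏 i (π m) (π (m + 1))
              - ∑ i ∈ Finset.Icc 2 k, fd i (π m) (X (π m)) * (G i (π (m + 1)) - G i (π m))))
          - (F t (X t) - F s (X s))| < ε :=
  rough_ito_formula_general T α hα hα1 k hk X G CX CG hX hG 𝕏 h𝕏 F fd ft hfd0 hx ht hcx hct
end
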